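/- arXiv:2604.04656 — 12 statements merged into one kernel-verified Lean document; each statement's English description precedes it below -/
import Mathlib

section
/- Let n ≥ 2, let x = (x₁,…,xₙ) ∈ ℤⁿ be nonzero, and let g = gcd(x₁,…,xₙ). Let b₁,…,b_{n−1} be any ℤ-basis of the submodule L⊥ₓ = {c ∈ ℤⁿ : Σᵢ cᵢxᵢ = 0}, and let B be the (n−1)×n integer matrix whose rows are b₁,…,b_{n−1}. Then g² · det(B·Bᵀ) = Σ_{i=1}^n xᵢ²; equivalently, the determinant (covolume) of the lattice L⊥ₓ equals ‖x‖₂ / g. -/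
/-!
Write `x = g • y` with `y` primitive and pick `v` with `y ⬝ᵥ v = 1` (Bézout). Then `v` together
with the basis `b` of `L⊥ₓ = ker (y ⬝ᵥ ·)` is a ℤ-basis of `ℤⁿ`, so its Gram determinant is the
square of a unit, i.e. `1`. The family `y, b` has coordinate matrix of determinant `y ⬝ᵥ y` (the
`v`-coordinate of `y`) in that basis, and block diagonal Gram matrix with blocks `y ⬝ᵥ y` and
`B * Bᵀ`. Hence `(y ⬝ᵥ y) * det (B * Bᵀ) = (y ⬝ᵥ y) ^ 2`, and
`g ^ 2 * det (B * Bᵀ) = g ^ 2 * (y ⬝ᵥ y) = x ⬝ᵥ x`.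
-/

open Matrix Module

section Gram

variable {ι κ R : Type*} [Fintype ι] [CommRing R]

theorem Module.Basis.toMatrix_transpose_mul_of (β : Basis ι R (κ → R)) (w : ι → κ → R) :
    (β.toMatrix w)ᵀ * of β = of w := by
  ext i k
  simpa [mul_apply, Finset.sum_apply] using congrFun (β.sum_toMatrix_smul_self (v := w) (j := i)) k

variable [Fintype κ] [DecidableEq ι]

theorem Module.Basis.det_of_mul_transpose (β : Basis ι R (κ → R)) (w : ι → κ → R) :
    (of w * (of w)ᵀ).det = (β.toMatrix w).det ^ 2 * (of β * (of β)ᵀ).det := by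
  rw [← β.toMatrix_transpose_mul_of w, transpose_mul, transpose_transpose, Matrix.mul_assoc,
    ← Matrix.mul_assoc (of β), ← Matrix.mul_assoc, det_mul, det_mul, det_transpose]
  ring

theorem Module.Basis.det_of_mul_transpose_self (β : Basis ι ℤ (κ → ℤ)) :
    (of β * (of β)ᵀ).det = 1 := by
  classical
  let std := (Pi.basisFun ℤ κ).reindex (β.indexEquiv (Pi.basisFun ℤ κ)).symm
  have hstd : of std * (of std)ᵀ = 1 := by
    ext i j
    simp [std, mul_apply, Matrix.one_apply, Pi.single_apply, eq_comm]
  rw [std.det_of_mul_transpose, hstd, det_one, mul_one, ← Basis.det_apply]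
  exact Int.isUnit_sq (std.isUnit_det β)

end Gram

theorem Matrix.det_eq_mul_det_submatrix_succ_of_row_zero {R : Type*} [CommRing R] {m : ℕ}
    (A : Matrix (Fin (m + 1)) (Fin (m + 1)) R) (h : ∀ j : Fin m, A 0 j.succ = 0) :
    A.det = A 0 0 * (A.submatrix Fin.succ Fin.succ).det := by
  simp [det_succ_row_zero A, Fin.sum_univ_succ, h]

namespace Module.Basis

variable {R M : Type*} [CommRing R] [AddCommGroup M] [Module R M]
  (φ : M →ₗ[R] R) {v : M} (hv : φ v = 1) {m : ℕ} (b : Basis (Fin m) R (LinearMap.ker φ))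

noncomputable def finConsKer : Basis (Fin (m + 1)) R M :=
  mkFinCons v b (fun c z hz hcz => by simpa [hv, LinearMap.mem_ker.mp hz] using congr(φ $hcz))
    (fun z => ⟨-φ z, by simp [hv]⟩)

theorem finConsKer_zero : finConsKer φ hv b 0 = v := by
  simp [finConsKer]

theorem finConsKer_succ (j : Fin m) : finConsKer φ hv b j.succ = b j := by
  simp [finConsKer]

theorem finConsKer_repr_zero (z : M) : (finConsKer φ hv b).repr z 0 = φ z := by
  suffices (finConsKer φ hv b).coord 0 = φ from LinearMap.congr_fun this z
  refine (finConsKer φ hv b).ext fun i => ?_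
  rw [coord_apply, repr_self]
  cases i using Fin.cases with
  | zero => simp [finConsKer_zero, hv]
  | succ j => simp [finConsKer_succ, Fin.succ_ne_zero]

theorem det_toMatrix_finConsKer (y : M) :
    ((finConsKer φ hv b).toMatrix (Fin.cons y (Subtype.val ∘ b))).det = φ y := by
  have hupdate : (Fin.cons y (Subtype.val ∘ b) : Fin (m + 1) → M) =
      Function.update (finConsKer φ hv b) 0 y := by
    rw [finConsKer, coe_mkFinCons, Fin.update_cons_zero]
  rw [hupdate, toMatrix_update, toMatrix_self, det_eq_mul_det_submatrix_succ_of_row_zero]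
  · have hminor : ((1 : Matrix (Fin (m + 1)) (Fin (m + 1)) R).updateCol 0
        ((finConsKer φ hv b).repr y)).submatrix Fin.succ Fin.succ = 1 := by
      ext i j
      simp [one_apply]
    simp [hminor, finConsKer_repr_zero]
  · exact fun j => by simp [one_apply, (Fin.succ_ne_zero j).symm]

end Module.Basis

theorem det_of_mul_transpose_basis_ker_dotProduct {κ : Type*} [Fintype κ]
    {y v : κ → ℤ} (hv : y ⬝ᵥ v = 1) {m : ℕ}
    (b : Basis (Fin m) ℤ (LinearMap.ker (dotProductBilin ℤ ℤ y))) :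
    (of (fun i => (b i : κ → ℤ)) * (of fun i => (b i : κ → ℤ))ᵀ).det = y ⬝ᵥ y := by
  have hφv : dotProductBilin ℤ ℤ y v = 1 := hv
  let w : Fin (m + 1) → κ → ℤ := Fin.cons y (Subtype.val ∘ b)
  have hdet_sq : (of w * (of w)ᵀ).det = (y ⬝ᵥ y) ^ 2 := by
    let β := Basis.finConsKer _ hφv b
    rw [β.det_of_mul_transpose w, Basis.det_toMatrix_finConsKer, β.det_of_mul_transpose_self,
      mul_one]
    rfl
  have hdet_block : (of w * (of w)ᵀ).det =
      (y ⬝ᵥ y) * (of (fun i => (b i : κ → ℤ)) * (of fun i => (b i : κ → ℤ))ᵀ).det := by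
    rw [det_eq_mul_det_submatrix_succ_of_row_zero]
    · rfl
    · intro j
      exact (b j).2
  have hy : y ⬝ᵥ y ≠ 0 := by
    rw [Ne, dotProduct_self_eq_zero]
    rintro rfl
    simp at hv
  exact mul_left_cancel₀ hy (by rw [← hdet_block, hdet_sq, sq])

theorem kernel_lattice_determinant_general (n : ℕ)
    (x : Fin n → ℤ) (hx : x ≠ 0)
    (g : ℤ) (hg : g = Finset.univ.gcd x)
    (K : Submodule ℤ (Fin n → ℤ))
    (hK : ∀ c : Fin n → ℤ, c ∈ K ↔ ∑ i, c i * x i = 0)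
    (b : Module.Basis (Fin (n - 1)) ℤ K)
    (B : Matrix (Fin (n - 1)) (Fin n) ℤ)
    (hB : ∀ i j, B i j = (b i : Fin n → ℤ) j) :
    g ^ 2 * (B * B.transpose).det = ∑ i, (x i) ^ 2 := by
  have hg0 : g ≠ 0 := fun h =>
    hx (funext fun i => Finset.gcd_eq_zero_iff.1 (hg ▸ h) i (Finset.mem_univ i))
  obtain ⟨i₀, -⟩ := Function.ne_iff.mp hx
  obtain ⟨y, hxy, hy⟩ := Finset.univ.extract_gcd x ⟨i₀, Finset.mem_univ i₀⟩
  obtain ⟨v, hv⟩ := Finset.univ.gcd_eq_sum_mul y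
  have hx_eq : x = g • y := funext fun i => by simp [hxy i, hg]
  have hK_eq : K = LinearMap.ker (dotProductBilin ℤ ℤ y) := by
    ext c
    rw [hK, LinearMap.mem_ker, dotProductBilin_apply_apply, dotProduct_comm]
    change c ⬝ᵥ x = 0 ↔ _
    rw [hx_eq, dotProduct_smul, smul_eq_mul, mul_eq_zero, or_iff_right hg0]
  subst hK_eq
  have hB_eq : B = of fun i => (b i : Fin n → ℤ) := Matrix.ext hB
  rw [hB_eq, det_of_mul_transpose_basis_ker_dotProduct (hy ▸ hv).symm, hx_eq]
  simp only [dotProduct, Finset.mul_sum, Pi.smul_apply, smul_eq_mul]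
  exact Finset.sum_congr rfl fun i _ => by ring

/-- For nonzero `x ∈ ℤⁿ` (n ≥ 2) with `g = gcd(x₁,…,xₙ)`: if `b₁,…,b_{n-1}` is any
ℤ-basis of the kernel lattice `L⊥ₓ = {c : ∑ i, cᵢ xᵢ = 0}` and `B` is the
`(n-1) × n` matrix whose rows are the `bᵢ`, then `g² · det (B * Bᵀ) = ∑ i, xᵢ²`,
i.e. the covolume of `L⊥ₓ` is `‖x‖₂ / g`. -/
theorem kernel_lattice_determinant (n : ℕ) (hn : 2 ≤ n)
    (x : Fin n → ℤ) (hx : x ≠ 0)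
    (g : ℤ) (hg : g = Finset.univ.gcd x)
    (K : Submodule ℤ (Fin n → ℤ))
    (hK : ∀ c : Fin n → ℤ, c ∈ K ↔ ∑ i, c i * x i = 0)
    (b : Module.Basis (Fin (n - 1)) ℤ K)
    (B : Matrix (Fin (n - 1)) (Fin n) ℤ)
    (hB : ∀ i j, B i j = (b i : Fin n → ℤ) j) :
    g ^ 2 * (B * B.transpose).det = ∑ i, (x i) ^ 2 :=
  kernel_lattice_determinant_general n x hx g hg K hK b B hB
end

section
/- Let n ≥ 1, let d be a positive integer, and let x = (x₁,…,xₙ) ∈ ℤⁿ be nonzero with g = gcd(x₁,…,xₙ). If ‖x‖₂ / g < (d+1)^{n−1}, then there exists a nonzero c ∈ ℤⁿ with |cᵢ| ≤ d for all i and Σ_{i=1}^n cᵢxᵢ = 0. -/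
open Finset

private lemma sb_sum_cast (M : ℕ) : 2 * ∑ a ∈ Finset.range M, (a : ℤ) = M * (M - 1) := by
  induction M with
  | zero => simp
  | succ M ih =>
    rw [Finset.sum_range_succ]
    push_cast
    push_cast at ih
    linear_combination ih

private lemma sb_sum_sq_cast (M : ℕ) : 6 * ∑ a ∈ Finset.range M, (a : ℤ) ^ 2
    = M * (M - 1) * (2 * M - 1) := by
  induction M with
  | zero => simp
  | succ M ih =>
    rw [Finset.sum_range_succ]
    push_cast
    push_cast at ih
    linear_combination ih

private lemma sb_center (m : ℕ) : ∑ a ∈ Finset.range (m + 1), (2 * (a : ℤ) - m) = 0 := by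
  have h1 : ∑ a ∈ Finset.range (m + 1), (2 * (a : ℤ) - m)
      = 2 * (∑ a ∈ Finset.range (m + 1), (a : ℤ)) - (m + 1) * m := by
    rw [Finset.sum_sub_distrib, Finset.mul_sum, Finset.sum_const, Finset.card_range]
    ring
  have h2 := sb_sum_cast (m + 1)
  push_cast at h2
  linarith [h1, h2]

private lemma sb_center_sq (m : ℕ) :
    3 * ∑ a ∈ Finset.range (m + 1), (2 * (a : ℤ) - m) ^ 2 = (m : ℤ) * ((m : ℤ) + 1) * ((m : ℤ) + 2) := by
  have h1 : ∑ a ∈ Finset.range (m + 1), (2 * (a : ℤ) - m) ^ 2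
      = 4 * (∑ a ∈ Finset.range (m + 1), (a : ℤ) ^ 2)
        - (4 * m) * (∑ a ∈ Finset.range (m + 1), (a : ℤ)) + ((m : ℤ) + 1) * (m : ℤ) ^ 2 := by
    have e : ∀ a ∈ Finset.range (m + 1),
        (2 * (a : ℤ) - m) ^ 2 = 4 * (a : ℤ) ^ 2 - (4 * m) * (a : ℤ) + (m : ℤ) ^ 2 := by
      intro a _; ring
    rw [Finset.sum_congr rfl e]
    rw [Finset.sum_add_distrib, Finset.sum_sub_distrib, ← Finset.mul_sum, ← Finset.mul_sum,
      Finset.sum_const, Finset.card_range]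
    ring
  have h2 := sb_sum_cast (m + 1)
  have h3 := sb_sum_sq_cast (m + 1)
  push_cast at h2 h3
  linear_combination (3 : ℤ) * h1 + 2 * h3 - (6 * (m : ℤ)) * h2

private lemma sb_distinct_mult_sq (M : ℤ) (hM : 0 < M) :
    ∀ s : Finset ℤ, (∀ a ∈ s, 0 < a ∧ M ∣ a) →
      M ^ 2 * ((s.card : ℤ) * ((s.card : ℤ) + 1) * (2 * (s.card : ℤ) + 1))
        ≤ 6 * ∑ a ∈ s, a ^ 2 := by
  intro s
  induction s using Finset.strongInduction with
  | _ s ih =>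
    intro hs
    rcases s.eq_empty_or_nonempty with rfl | hne
    · simp
    · set t := s.max' hne with htdef
      have ht : t ∈ s := s.max'_mem hne
      have htpos : 0 < t := (hs t ht).1
      obtain ⟨b, hb⟩ := (hs t ht).2
      have hbpos : 0 < b := by nlinarith
      -- every element of s, divided by M, lands injectively in Icc 1 b
      have himg : s.image (fun a => a / M) ⊆ Finset.Icc 1 b := by
        intro y hy
        rw [Finset.mem_image] at hy
        obtain ⟨a, ha, rfl⟩ := hy
        obtain ⟨ca, hca⟩ := (hs a ha).2
        have hapos := (hs a ha).1
        have hcapos : 0 < ca := by nlinarith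
        have hale : a ≤ t := s.le_max' a ha
        have hcale : ca ≤ b := by nlinarith
        rw [hca, Int.mul_ediv_cancel_left _ hM.ne']
        exact Finset.mem_Icc.mpr ⟨hcapos, hcale⟩
      have hinj : Set.InjOn (fun a => a / M) s := by
        intro a ha a' ha' hEq
        obtain ⟨ca, hca⟩ := (hs a ha).2
        obtain ⟨ca', hca'⟩ := (hs a' ha').2
        simp only [hca, hca', Int.mul_ediv_cancel_left _ hM.ne'] at hEq
        rw [hca, hca', hEq]
      have hcard_le : (s.card : ℤ) ≤ b := by
        have h1 : s.card = (s.image (fun a => a / M)).card :=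
          (Finset.card_image_of_injOn hinj).symm
        have h2 : (s.image (fun a => a / M)).card ≤ (Finset.Icc 1 b).card :=
          Finset.card_le_card himg
        have h3 : (Finset.Icc (1 : ℤ) b).card = b.toNat := by
          rw [Int.card_Icc]
          simp
        have : (s.card : ℤ) ≤ (b.toNat : ℤ) := by
          rw [h1] at *
          exact_mod_cast h3 ▸ h2
        rwa [Int.toNat_of_nonneg hbpos.le] at this
      have htM : M * (s.card : ℤ) ≤ t := by
        rw [hb]
        exact mul_le_mul_of_nonneg_left hcard_le hM.le
      set s' := s.erase t with hs'def
      have hsub : s' ⊂ s := Finset.erase_ssubset ht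
      have IH := ih s' hsub (fun a ha => hs a (Finset.mem_of_mem_erase ha))
      have hsplit : ∑ a ∈ s', a ^ 2 + t ^ 2 = ∑ a ∈ s, a ^ 2 :=
        Finset.sum_erase_add s _ ht
      have hk : (s.card : ℤ) = (s'.card : ℤ) + 1 := by
        have : s'.card = s.card - 1 := Finset.card_erase_of_mem ht
        have hpos : 1 ≤ s.card := Finset.card_pos.mpr hne
        rw [this]
        push_cast [hpos]
        ring
      have ht2 : M ^ 2 * ((s'.card : ℤ) + 1) ^ 2 ≤ t ^ 2 := by
        rw [hk] at htM
        have h0 : 0 ≤ M * ((s'.card : ℤ) + 1) := by positivity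
        calc M ^ 2 * ((s'.card : ℤ) + 1) ^ 2
            = (M * ((s'.card : ℤ) + 1)) * (M * ((s'.card : ℤ) + 1)) := by ring
          _ ≤ t * t := mul_le_mul htM htM h0 htpos.le
          _ = t ^ 2 := by ring
      rw [hk]
      nlinarith [IH, ht2, hsplit]

private lemma sb_pair_bound (M : ℤ) (hM : 0 < M) :
    ∀ V : Finset ℤ, (∀ a ∈ V, ∀ b ∈ V, M ∣ a - b) →
      M ^ 2 * ((V.card : ℤ) ^ 2 * ((V.card : ℤ) ^ 2 - 1))
        ≤ 6 * ∑ a ∈ V, ∑ b ∈ V, (a - b) ^ 2 := by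
  intro V
  induction V using Finset.strongInduction with
  | _ V ih =>
    intro hcong
    rcases V.eq_empty_or_nonempty with rfl | hne
    · simp
    · set t := V.max' hne with htdef
      have ht : t ∈ V := V.max'_mem hne
      set V' := V.erase t with hV'def
      have hsub : V' ⊂ V := Finset.erase_ssubset ht
      have hlt : ∀ b ∈ V', b < t := by
        intro b hb
        exact lt_of_le_of_ne (V.le_max' b (Finset.mem_of_mem_erase hb))
          (Finset.ne_of_mem_erase hb)
      -- split the double sum
      have hrow : ∀ a : ℤ, ∑ b ∈ V, (a - b) ^ 2 = ∑ b ∈ V', (a - b) ^ 2 + (a - t) ^ 2 :=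
        fun a => (Finset.sum_erase_add V _ ht).symm
      have hsplit : ∑ a ∈ V, ∑ b ∈ V, (a - b) ^ 2
          = ∑ a ∈ V', ∑ b ∈ V', (a - b) ^ 2 + 2 * ∑ b ∈ V', (t - b) ^ 2 := by
        rw [← Finset.sum_erase_add V _ ht]
        simp_rw [hrow]
        rw [Finset.sum_add_distrib]
        have h1 : ∑ a ∈ V', (a - t) ^ 2 = ∑ b ∈ V', (t - b) ^ 2 := by
          apply Finset.sum_congr rfl
          intro a _
          ring
        rw [h1]
        ring
      -- the gaps t - b are distinct positive multiples of M
      set W := V'.image (fun b => t - b) with hWdef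
      have hWinj : Set.InjOn (fun b => t - b) V' := fun a _ a' _ h => by
        simpa [sub_left_injective.eq_iff] using h
      have hWcard : W.card = V'.card := Finset.card_image_of_injOn hWinj
      have hWsum : ∑ w ∈ W, w ^ 2 = ∑ b ∈ V', (t - b) ^ 2 :=
        Finset.sum_image (fun a ha a' ha' h => hWinj ha ha' h)
      have hW : ∀ w ∈ W, 0 < w ∧ M ∣ w := by
        intro w hw
        rw [hWdef, Finset.mem_image] at hw
        obtain ⟨b, hb, rfl⟩ := hw
        exact ⟨sub_pos.mpr (hlt b hb), hcong t ht b (Finset.mem_of_mem_erase hb)⟩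
      have hWbound := sb_distinct_mult_sq M hM W hW
      rw [hWcard, hWsum] at hWbound
      have IH := ih V' hsub
        (fun a ha b hb => hcong a (Finset.mem_of_mem_erase ha) b (Finset.mem_of_mem_erase hb))
      have hk : (V.card : ℤ) = (V'.card : ℤ) + 1 := by
        have : V'.card = V.card - 1 := Finset.card_erase_of_mem ht
        have hpos : 1 ≤ V.card := Finset.card_pos.mpr hne
        rw [this]
        push_cast [hpos]
        ring
      rw [hk, hsplit]
      nlinarith [IH, hWbound]

private lemma sb_final (g m X P Nc A S1 : ℤ) (hmz : 0 < m) (hP1 : 1 ≤ P)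
    (hNcpos : 0 < Nc) (hNcP : Nc = P * (m + 1))
    (hA : 3 * A = Nc * (m * (m + 2)) * X)
    (hpair : (2 * g) ^ 2 * (Nc ^ 2 * (Nc ^ 2 - 1)) ≤ 6 * (2 * Nc * A - 2 * S1 ^ 2)) :
    g ^ 2 * P ^ 2 ≤ X := by
  have s1 : (2 * g) ^ 2 * (Nc ^ 2 * (Nc ^ 2 - 1)) ≤ 12 * Nc * A := by
    nlinarith [sq_nonneg S1]
  have h12 : 12 * Nc * A = (4 * Nc) * (Nc * (m * (m + 2)) * X) := by
    linear_combination (4 * Nc) * hA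
  have s4 : (4 * Nc) * (g ^ 2 * (Nc * (Nc ^ 2 - 1))) ≤ (4 * Nc) * (Nc * (m * (m + 2)) * X) := by
    calc (4 * Nc) * (g ^ 2 * (Nc * (Nc ^ 2 - 1)))
        = (2 * g) ^ 2 * (Nc ^ 2 * (Nc ^ 2 - 1)) := by ring
      _ ≤ 12 * Nc * A := s1
      _ = (4 * Nc) * (Nc * (m * (m + 2)) * X) := h12
  have s5 : g ^ 2 * (Nc * (Nc ^ 2 - 1)) ≤ Nc * (m * (m + 2)) * X :=
    le_of_mul_le_mul_left s4 (by linarith)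
  have s7 : g ^ 2 * (Nc ^ 2 - 1) ≤ (m * (m + 2)) * X := by
    have step : Nc * (g ^ 2 * (Nc ^ 2 - 1)) ≤ Nc * ((m * (m + 2)) * X) := by
      calc Nc * (g ^ 2 * (Nc ^ 2 - 1)) = g ^ 2 * (Nc * (Nc ^ 2 - 1)) := by ring
        _ ≤ Nc * (m * (m + 2)) * X := s5
        _ = Nc * ((m * (m + 2)) * X) := by ring
    exact le_of_mul_le_mul_left step hNcpos
  have s8 : (m * (m + 2)) * (g ^ 2 * P ^ 2) ≤ g ^ 2 * (Nc ^ 2 - 1) := by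
    have hsq1 : 1 ≤ P ^ 2 := by nlinarith
    have hNc2 : Nc ^ 2 = P ^ 2 * (m * (m + 2) + 1) := by rw [hNcP]; ring
    have hnn : 0 ≤ g ^ 2 * (P ^ 2 - 1) := mul_nonneg (sq_nonneg g) (by linarith)
    rw [hNc2]
    linarith
  have s9 : (m * (m + 2)) * (g ^ 2 * P ^ 2) ≤ (m * (m + 2)) * X := le_trans s8 s7
  exact le_of_mul_le_mul_left s9 (mul_pos hmz (by linarith))


/-- If `‖x‖₂ / gcd(x) < (d+1)^(n-1)`, then there is a nonzero `c ∈ {-d,…,d}ⁿ`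
with `∑ i, cᵢ xᵢ = 0`. -/
theorem subset_balancing_solution_exists (n : ℕ) (hn : 1 ≤ n)
    (d : ℤ) (hd : 0 < d) (x : Fin n → ℤ) (hx : x ≠ 0)
    (h : Real.sqrt (∑ i, (x i : ℝ) ^ 2) / ((Finset.univ.gcd x : ℤ) : ℝ)
        < ((d : ℝ) + 1) ^ (n - 1)) :
    ∃ c : Fin n → ℤ, c ≠ 0 ∧ (∀ i, |c i| ≤ d) ∧ ∑ i, c i * x i = 0 := by
  by_contra hno
  push_neg at hno
  set g : ℤ := Finset.univ.gcd x with hgdef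
  have hgne : g ≠ 0 := by
    rw [hgdef, Ne, Finset.gcd_eq_zero_iff]
    intro hz
    exact hx (funext fun i => hz i (Finset.mem_univ i))
  have hgnn : 0 ≤ g := Int.nonneg_of_normalize_eq_self (Finset.normalize_gcd)
  have hgpos : 0 < g := lt_of_le_of_ne hgnn (Ne.symm hgne)
  have hgdvd : ∀ i, g ∣ x i := fun i => Finset.gcd_dvd (Finset.mem_univ i)
  set X : ℤ := ∑ i, (x i) ^ 2 with hXdef
  -- translate the real hypothesis
  have hX : X < g ^ 2 * ((d + 1) ^ (n - 1)) ^ 2 := by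
    have hg2 : (0 : ℝ) < (g : ℝ) := by exact_mod_cast hgpos
    have hs : Real.sqrt (∑ i, (x i : ℝ) ^ 2) < ((d : ℝ) + 1) ^ (n - 1) * (g : ℝ) :=
      (div_lt_iff₀ hg2).mp h
    have hSnn : (0 : ℝ) ≤ ∑ i, (x i : ℝ) ^ 2 := by positivity
    have hsq := Real.sq_sqrt hSnn
    have h2 : ∑ i, (x i : ℝ) ^ 2 < (((d : ℝ) + 1) ^ (n - 1) * (g : ℝ)) ^ 2 := by
      nlinarith [Real.sqrt_nonneg (∑ i, (x i : ℝ) ^ 2), hs]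
    have hXcast : ((X : ℤ) : ℝ) = ∑ i, (x i : ℝ) ^ 2 := by
      rw [hXdef]
      push_cast
      ring
    have h3 : ((X : ℤ) : ℝ) < ((g ^ 2 * ((d + 1) ^ (n - 1)) ^ 2 : ℤ) : ℝ) := by
      rw [hXcast]
      push_cast
      nlinarith [h2]
    exact_mod_cast h3
  set m : ℕ := d.toNat with hmdef
  have hm : (m : ℤ) = d := Int.toNat_of_nonneg hd.le
  have hm1 : 1 ≤ m := by omega
  set B : Finset (Fin n → ℕ) := Fintype.piFinset (fun _ => Finset.range (m + 1)) with hBdef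
  set T : (Fin n → ℕ) → ℤ := fun c => ∑ i, (2 * (c i : ℤ) - m) * x i with hTdef
  -- membership bounds
  have hmem : ∀ c ∈ B, ∀ i, c i ≤ m := by
    intro c hc i
    have := (Fintype.mem_piFinset.mp hc) i
    rw [Finset.mem_range] at this
    omega
  -- injectivity of T on B
  have hinj : Set.InjOn T B := by
    intro c hc c' hc' hEq
    by_contra hne
    have hxne : ∃ i, c i ≠ c' i := by
      by_contra hall
      push_neg at hall
      exact hne (funext hall)
    set e : Fin n → ℤ := fun i => (c i : ℤ) - (c' i : ℤ) with hedef
    have he0 : e ≠ 0 := by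
      obtain ⟨i, hi⟩ := hxne
      intro hz
      have : e i = 0 := congrFun hz i
      rw [hedef] at this
      simp only [sub_eq_zero] at this
      exact hi (by exact_mod_cast this)
    have hbd : ∀ i, |e i| ≤ d := by
      intro i
      have h1 := hmem c hc i
      have h2 := hmem c' hc' i
      have hci : (c i : ℤ) ≤ d := by rw [← hm]; exact_mod_cast h1
      have hci' : (c' i : ℤ) ≤ d := by rw [← hm]; exact_mod_cast h2
      have h0 : (0 : ℤ) ≤ (c i : ℤ) := by positivity
      have h0' : (0 : ℤ) ≤ (c' i : ℤ) := by positivity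
      have heq : e i = (c i : ℤ) - (c' i : ℤ) := rfl
      rw [heq, abs_le]
      constructor <;> linarith
    have hsum : ∑ i, e i * x i = 0 := by
      have hdiff : T c - T c' = 2 * ∑ i, e i * x i := by
        rw [hTdef]
        simp only
        rw [← Finset.sum_sub_distrib, Finset.mul_sum]
        apply Finset.sum_congr rfl
        intro i _
        rw [hedef]
        ring
      rw [hEq, sub_self] at hdiff
      linarith
    exact hno e he0 hbd hsum
  -- the centered single-coordinate sums
  set Q0 : ℤ := ∑ a ∈ Finset.range (m + 1), (2 * (a : ℤ) - m) ^ 2 with hQ0def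
  have key : ∀ i j : Fin n, ∑ c ∈ B, (2 * (c i : ℤ) - m) * (2 * (c j : ℤ) - m)
      = if i = j then Q0 * ((m : ℤ) + 1) ^ (n - 1) else 0 := by
    intro i j
    rcases eq_or_ne i j with rfl | hij
    · rw [if_pos rfl]
      have hterm : ∀ c : Fin n → ℕ, (2 * (c i : ℤ) - m) * (2 * (c i : ℤ) - m)
          = ∏ k, (if k = i then (2 * (c k : ℤ) - m) ^ 2 else 1) := by
        intro c
        rw [Fintype.prod_ite_eq']
        ring
      have hps := Finset.prod_univ_sum (fun _ : Fin n => Finset.range (m + 1))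
        (fun k a => if k = i then (2 * (a : ℤ) - m) ^ 2 else 1)
      rw [Finset.sum_congr rfl (fun c _ => hterm c), hBdef, ← hps]
      have hfac : ∀ k : Fin n, ∑ a ∈ Finset.range (m + 1),
          (if k = i then (2 * (a : ℤ) - m) ^ 2 else 1) = if k = i then Q0 else ((m : ℤ) + 1) := by
        intro k
        split_ifs with hk
        · rfl
        · simp
      rw [Finset.prod_congr rfl (fun k _ => hfac k)]
      rw [← Finset.mul_prod_erase Finset.univ _ (Finset.mem_univ i), if_pos rfl]
      congr 1
      have : ∀ k ∈ Finset.univ.erase i, (if k = i then Q0 else ((m : ℤ) + 1)) = ((m : ℤ) + 1) := by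
        intro k hk
        rw [if_neg (Finset.ne_of_mem_erase hk)]
      rw [Finset.prod_congr rfl this, Finset.prod_const,
        Finset.card_erase_of_mem (Finset.mem_univ i)]
      simp
    · rw [if_neg hij]
      have hterm : ∀ c : Fin n → ℕ, (2 * (c i : ℤ) - m) * (2 * (c j : ℤ) - m)
          = ∏ k, ((if k = i then (2 * (c k : ℤ) - m) else 1)
              * (if k = j then (2 * (c k : ℤ) - m) else 1)) := by
        intro c
        rw [Finset.prod_mul_distrib, Fintype.prod_ite_eq', Fintype.prod_ite_eq']
      have hps := Finset.prod_univ_sum (fun _ : Fin n => Finset.range (m + 1))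
        (fun k a => (if k = i then (2 * (a : ℤ) - m) else 1) * (if k = j then (2 * (a : ℤ) - m) else 1))
      rw [Finset.sum_congr rfl (fun c _ => hterm c), hBdef, ← hps]
      apply Finset.prod_eq_zero (Finset.mem_univ i)
      have : ∀ a ∈ Finset.range (m + 1),
          (if i = i then (2 * (a : ℤ) - m) else 1) * (if i = j then (2 * (a : ℤ) - m) else 1)
          = (2 * (a : ℤ) - m) := by
        intro a _
        rw [if_pos rfl, if_neg hij, mul_one]
      rw [Finset.sum_congr rfl this]
      exact sb_center m
  -- the second moment identity
  have hident : ∑ c ∈ B, (T c) ^ 2 = Q0 * ((m : ℤ) + 1) ^ (n - 1) * X := by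
    have h1 : ∀ c : Fin n → ℕ, (T c) ^ 2
        = ∑ i, ∑ j, (x i * x j) * ((2 * (c i : ℤ) - m) * (2 * (c j : ℤ) - m)) := by
      intro c
      rw [hTdef]
      simp only
      rw [sq, Finset.sum_mul_sum]
      apply Finset.sum_congr rfl
      intro i _
      apply Finset.sum_congr rfl
      intro j _
      ring
    calc ∑ c ∈ B, (T c) ^ 2
        = ∑ c ∈ B, ∑ i, ∑ j, (x i * x j) * ((2 * (c i : ℤ) - m) * (2 * (c j : ℤ) - m)) :=
          Finset.sum_congr rfl (fun c _ => h1 c)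
      _ = ∑ i, ∑ j, ∑ c ∈ B, (x i * x j) * ((2 * (c i : ℤ) - m) * (2 * (c j : ℤ) - m)) := by
          rw [Finset.sum_comm]
          apply Finset.sum_congr rfl
          intro i _
          rw [Finset.sum_comm]
      _ = ∑ i, ∑ j, (x i * x j) * (if i = j then Q0 * ((m : ℤ) + 1) ^ (n - 1) else 0) := by
          apply Finset.sum_congr rfl
          intro i _
          apply Finset.sum_congr rfl
          intro j _
          rw [← Finset.mul_sum, key]
      _ = ∑ i, (x i * x i) * (Q0 * ((m : ℤ) + 1) ^ (n - 1)) := by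
          apply Finset.sum_congr rfl
          intro i _
          simp
      _ = Q0 * ((m : ℤ) + 1) ^ (n - 1) * X := by
          rw [hXdef, Finset.mul_sum]
          apply Finset.sum_congr rfl
          intro i _
          ring
  -- the image of B under T consists of distinct values, congruent mod 2g
  have hNB : B.card = (m + 1) ^ n := by
    rw [hBdef, Fintype.card_piFinset]
    simp
  set V : Finset ℤ := B.image T with hVdef
  have hVcard : V.card = (m + 1) ^ n := by
    rw [hVdef, Finset.card_image_of_injOn hinj, hNB]
  have hVsum : ∑ v ∈ V, v ^ 2 = ∑ c ∈ B, (T c) ^ 2 :=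
    Finset.sum_image (fun a ha b hb hab => hinj ha hb hab)
  have hVcong : ∀ a ∈ V, ∀ b ∈ V, (2 * g) ∣ a - b := by
    intro a ha b hb
    rw [hVdef, Finset.mem_image] at ha hb
    obtain ⟨c, hc, rfl⟩ := ha
    obtain ⟨c', hc', rfl⟩ := hb
    have hdiff : T c - T c' = ∑ i, (2 * ((c i : ℤ) - (c' i : ℤ))) * x i := by
      rw [hTdef]
      simp only
      rw [← Finset.sum_sub_distrib]
      apply Finset.sum_congr rfl
      intro i _
      ring
    rw [hdiff]
    apply Finset.dvd_sum
    intro i _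
    obtain ⟨u, hu⟩ := hgdvd i
    exact ⟨((c i : ℤ) - (c' i : ℤ)) * u, by rw [hu]; ring⟩
  have hpair := sb_pair_bound (2 * g) (by positivity) V hVcong
  -- expand the double sum
  have hexp : ∑ a ∈ V, ∑ b ∈ V, (a - b) ^ 2
      = 2 * (V.card : ℤ) * (∑ v ∈ V, v ^ 2) - 2 * (∑ v ∈ V, v) ^ 2 := by
    have hrow : ∀ a : ℤ, ∑ b ∈ V, (a - b) ^ 2
        = (V.card : ℤ) * a ^ 2 - (2 * (∑ b ∈ V, b)) * a + ∑ b ∈ V, b ^ 2 := by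
      intro a
      have e : ∀ b ∈ V, (a - b) ^ 2 = a ^ 2 - (2 * a) * b + b ^ 2 := fun b _ => by ring
      rw [Finset.sum_congr rfl e, Finset.sum_add_distrib, Finset.sum_sub_distrib,
        Finset.sum_const, ← Finset.mul_sum, nsmul_eq_mul]
      ring
    rw [Finset.sum_congr rfl (fun a _ => hrow a), Finset.sum_add_distrib,
      Finset.sum_sub_distrib, ← Finset.mul_sum, ← Finset.mul_sum,
      Finset.sum_const, nsmul_eq_mul]
    ring
  set P : ℤ := ((m : ℤ) + 1) ^ (n - 1) with hPdef
  set Nc : ℤ := ((m : ℤ) + 1) ^ n with hNcdef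
  have hNcP : Nc = P * ((m : ℤ) + 1) := by
    rw [hNcdef, hPdef, ← pow_succ]
    congr 1
    omega
  have hmz : (0 : ℤ) < (m : ℤ) := by exact_mod_cast hm1
  have hPpos : 0 < P := by rw [hPdef]; positivity
  have hNcpos : 0 < Nc := by rw [hNcdef]; positivity
  have hcV : (V.card : ℤ) = Nc := by
    rw [hVcard]
    push_cast
    rw [hNcdef]
  have hA : 3 * (∑ v ∈ V, v ^ 2) = Nc * ((m : ℤ) * ((m : ℤ) + 2)) * X := by
    rw [hVsum, hident]
    have h3Q := sb_center_sq m
    rw [← hQ0def] at h3Q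
    rw [hNcP, hPdef]
    linear_combination (((m : ℤ) + 1) ^ (n - 1) * X) * h3Q
  have hfin : ((d : ℤ) + 1) ^ (n - 1) = P := by rw [hPdef, hm]
  clear_value P Nc
  clear hPdef hNcdef
  have hP1 : 1 ≤ P := by omega
  rw [hexp, hcV] at hpair
  have s10 : g ^ 2 * P ^ 2 ≤ X :=
    sb_final g (m : ℤ) X P Nc (∑ v ∈ V, v ^ 2) (∑ v ∈ V, v) hmz hP1 hNcpos hNcP hA hpair
  rw [hfin] at hX
  linarith [s10, hX]
end

section
/- Let n ≥ 1, let d be a positive integer, let x = (x₁,…,xₙ) ∈ ℤⁿ, and let α, q be integers with α > d and q > d·Σ_{i=1}^n |xᵢ|. Then L_{α,q} ∩ { v ∈ ℤ^{n+1} : ‖v‖∞ ≤ d } = { (0, c₁, …, cₙ) : c ∈ ℤⁿ, Σ_{i=1}^n cᵢxᵢ = 0, and |cᵢ| ≤ d for all i }. -/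
/-- The lattice `L_{α,q} ⊆ ℤ^{n+1}` generated by the row `(αq, 0, …, 0)` and the
rows `(α xᵢ, eᵢ)`: its elements are `(α(q z₀ + ∑ i, zᵢ xᵢ), z₁, …, zₙ)`. -/
def latticeSet (n : ℕ) (x : Fin n → ℤ) (α q : ℤ) : Set (Fin (n + 1) → ℤ) :=
  {v | ∃ z₀ : ℤ, ∃ z : Fin n → ℤ,
    v = Fin.cons (α * (q * z₀ + ∑ i, z i * x i)) z}

lemma norm_le_iff_abs (n : ℕ) (d : ℤ) (hd : 0 ≤ d) (v : Fin (n + 1) → ℤ) :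
    ‖v‖ ≤ (d : ℝ) ↔ ∀ i, |v i| ≤ d := by
  rw [pi_norm_le_iff_of_nonneg (by exact_mod_cast hd)]
  simp [Int.norm_eq_abs, ← Int.cast_abs, Int.cast_le]

/-- If `α > d` and `q > d ∑ |xᵢ|`, the lattice points of `L_{α,q}` of ℓ∞-norm at
most `d` are exactly the vectors `(0, c)` with `∑ cᵢ xᵢ = 0` and `|cᵢ| ≤ d`. -/
theorem latticeSet_inter_ball (n : ℕ) (hn : 1 ≤ n)
    (d : ℤ) (hd : 0 < d) (x : Fin n → ℤ)
    (α q : ℤ) (hα : d < α) (hq : d * ∑ i, |x i| < q) :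
    latticeSet n x α q ∩ {v | ‖v‖ ≤ (d : ℝ)}
      = {v | ∃ c : Fin n → ℤ,
          v = Fin.cons 0 c ∧ (∑ i, c i * x i = 0) ∧ ∀ i, |c i| ≤ d} := by
  have hsum : 0 ≤ d * ∑ i, |x i| :=
    mul_nonneg hd.le (Finset.sum_nonneg fun i _ => abs_nonneg _)
  have hq0 : 0 < q := lt_of_le_of_lt hsum hq
  ext v
  simp only [Set.mem_inter_iff, Set.mem_setOf_eq, latticeSet]
  constructor
  · rintro ⟨⟨z₀, z, rfl⟩, hnorm⟩
    rw [norm_le_iff_abs n d hd.le] at hnorm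
    have h0 : |α * (q * z₀ + ∑ i, z i * x i)| ≤ d := by
      simpa using hnorm 0
    have hz : ∀ i, |z i| ≤ d := fun i => by simpa using hnorm i.succ
    -- the inner factor must vanish
    have hinner : q * z₀ + ∑ i, z i * x i = 0 := by
      by_contra h
      have h1 : α ≤ |α * (q * z₀ + ∑ i, z i * x i)| := by
        rw [abs_mul]
        calc α = α * 1 := (mul_one α).symm
        _ ≤ |α| * |q * z₀ + ∑ i, z i * x i| := by
          apply mul_le_mul (le_abs_self α) (Int.one_le_abs h) one_pos.le (abs_nonneg _)
      linarith [h0, h1]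
    -- bound the sum
    have hsz : |∑ i, z i * x i| ≤ d * ∑ i, |x i| := by
      calc |∑ i, z i * x i| ≤ ∑ i, |z i * x i| := Finset.abs_sum_le_sum_abs _ _
      _ ≤ ∑ i, d * |x i| := by
        apply Finset.sum_le_sum
        intro i _
        rw [abs_mul]
        exact mul_le_mul_of_nonneg_right (hz i) (abs_nonneg _)
      _ = d * ∑ i, |x i| := by rw [Finset.mul_sum]
    have hz₀ : z₀ = 0 := by
      by_contra h
      have : q ≤ |q * z₀| := by
        rw [abs_mul]
        calc q = q * 1 := (mul_one q).symm
        _ ≤ |q| * |z₀| := mul_le_mul (le_abs_self q) (Int.one_le_abs h) one_pos.le (abs_nonneg _)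
      have : q ≤ |∑ i, z i * x i| := by
        have := abs_sub_abs_le_abs_sub (q * z₀) (-(∑ i, z i * x i))
        rw [abs_neg, sub_neg_eq_add, hinner, abs_zero] at this
        linarith
      linarith
    rw [hz₀, mul_zero, zero_add] at hinner
    refine ⟨z, ?_, hinner, hz⟩
    rw [hz₀]
    simp [hinner]
  · rintro ⟨c, rfl, hsum0, hc⟩
    refine ⟨⟨0, c, by simp [hsum0]⟩, ?_⟩
    rw [norm_le_iff_abs n d hd.le]
    intro i
    refine Fin.cases ?_ ?_ i
    · simpa using hd.le
    · intro j; simpa using hc j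
end

section
/- Let n ≥ 1, let d be a positive integer, let x = (x₁,…,xₙ) ∈ ℤⁿ, and set α = d + 1 and q = d·Σ_{i=1}^n |xᵢ| + 1. Then there exists a nonzero v ∈ L_{α,q} with ‖v‖∞ ≤ d if and only if there exists a nonzero c ∈ ℤⁿ with |cᵢ| ≤ d for all i and Σ_{i=1}^n cᵢxᵢ = 0. Moreover, every nonzero v = (v₀, v₁, …, vₙ) ∈ L_{α,q} with ‖v‖∞ ≤ d satisfies v₀ = 0, and (v₁,…,vₙ) is such a vector c. -/
/-- Reduction of Subset Balancing with `C = {-d,…,d}` to `SVP∞`: with `α = d+1`,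
`q = d ∑ |xᵢ| + 1`, the lattice `L_{α,q}` has a nonzero vector of ℓ∞-norm at most
`d` iff there is a nonzero `c ∈ {-d,…,d}ⁿ` with `∑ cᵢ xᵢ = 0`; moreover every such
lattice vector has first coordinate `0` and its remaining coordinates form such a `c`. -/
theorem subset_balancing_svp_reduction (n : ℕ) (hn : 1 ≤ n)
    (d : ℤ) (hd : 0 < d) (x : Fin n → ℤ) :
    ((∃ v ∈ latticeSet n x (d + 1) (d * ∑ i, |x i| + 1),
        v ≠ 0 ∧ ‖v‖ ≤ (d : ℝ)) ↔
      (∃ c : Fin n → ℤ, c ≠ 0 ∧ (∀ i, |c i| ≤ d) ∧ ∑ i, c i * x i = 0)) ∧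
    (∀ v ∈ latticeSet n x (d + 1) (d * ∑ i, |x i| + 1),
      v ≠ 0 → ‖v‖ ≤ (d : ℝ) →
        v 0 = 0 ∧ (fun i : Fin n => v i.succ) ≠ 0 ∧
          (∀ i : Fin n, |v i.succ| ≤ d) ∧ ∑ i : Fin n, v i.succ * x i = 0) := by
  have hsx : (0 : ℤ) ≤ ∑ i, |x i| := Finset.sum_nonneg fun i _ => abs_nonneg _
  set q : ℤ := d * ∑ i, |x i| + 1 with hqdef
  have hq0 : 0 < q := by
    have : 0 ≤ d * ∑ i, |x i| := mul_nonneg hd.le hsx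
    omega
  have main : ∀ v ∈ latticeSet n x (d + 1) q, v ≠ 0 → ‖v‖ ≤ (d : ℝ) →
      v 0 = 0 ∧ (fun i : Fin n => v i.succ) ≠ 0 ∧
        (∀ i : Fin n, |v i.succ| ≤ d) ∧ ∑ i : Fin n, v i.succ * x i = 0 := by
    rintro v ⟨z₀, z, rfl⟩ hv hnorm
    have hcomp : ∀ i, |(Fin.cons ((d + 1) * (q * z₀ + ∑ j, z j * x j)) z : Fin (n+1) → ℤ) i| ≤ d := by
      intro i
      have := (pi_norm_le_iff_of_nonneg (by exact_mod_cast hd.le)).mp hnorm i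
      rwa [Int.norm_eq_abs, ← Int.cast_abs, Int.cast_le] at this
    have hz : ∀ i : Fin n, |z i| ≤ d := fun i => by simpa using hcomp i.succ
    have hS : |∑ i, z i * x i| ≤ d * ∑ i, |x i| := by
      calc |∑ i, z i * x i| ≤ ∑ i, |z i * x i| := Finset.abs_sum_le_sum_abs _ _
        _ = ∑ i, |z i| * |x i| := by simp [abs_mul]
        _ ≤ ∑ i, d * |x i| := Finset.sum_le_sum fun i _ =>
            mul_le_mul_of_nonneg_right (hz i) (abs_nonneg _)
        _ = d * ∑ i, |x i| := (Finset.mul_sum _ _ _).symm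
    have h0 : |(d + 1) * (q * z₀ + ∑ i, z i * x i)| ≤ d := by simpa using hcomp 0
    have hzero : q * z₀ + ∑ i, z i * x i = 0 := by
      by_contra h
      have h1 : 1 ≤ |q * z₀ + ∑ i, z i * x i| := Int.one_le_abs h
      have : d + 1 ≤ |(d + 1) * (q * z₀ + ∑ i, z i * x i)| := by
        rw [abs_mul, abs_of_pos (by linarith : (0:ℤ) < d + 1)]
        nlinarith
      omega
    have hz₀ : z₀ = 0 := by
      by_contra h
      have h1 : 1 ≤ |z₀| := Int.one_le_abs h
      have h2 : |q * z₀| = |∑ i, z i * x i| := by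
        rw [show q * z₀ = -(∑ i, z i * x i) by linarith, abs_neg]
      rw [abs_mul, abs_of_pos hq0] at h2
      nlinarith
    have hSzero : ∑ i, z i * x i = 0 := by
      rw [hz₀, mul_zero, zero_add] at hzero; exact hzero
    have hv0 : (Fin.cons ((d + 1) * (q * z₀ + ∑ i, z i * x i)) z : Fin (n+1) → ℤ) 0 = 0 := by
      simp [hzero]
    refine ⟨hv0, ?_, fun i => by simpa using hz i, by simpa using hSzero⟩
    intro h
    apply hv
    funext i
    induction i using Fin.cases with
    | zero => simpa using hv0
    | succ j => simpa using congrFun h j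
  refine ⟨⟨?_, ?_⟩, main⟩
  · rintro ⟨v, hv, hne, hnorm⟩
    obtain ⟨h0, hne', hb, hs⟩ := main v hv hne hnorm
    exact ⟨_, hne', hb, hs⟩
  · rintro ⟨c, hc0, hcb, hcs⟩
    refine ⟨Fin.cons 0 c, ⟨0, c, by simp [hcs]⟩, ?_, ?_⟩
    · intro h
      apply hc0
      funext i
      have := congrFun h i.succ
      simpa using this
    · refine (pi_norm_le_iff_of_nonneg (by exact_mod_cast hd.le)).mpr fun i => ?_
      refine Fin.cases ?_ ?_ i
      · simp; exact_mod_cast hd.le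
      · intro j
        simp only [Fin.cons_succ, Int.norm_eq_abs, ← Int.cast_abs]
        exact_mod_cast hcb j
end

section
/- Let n ≥ 2, let d be a positive integer, and let x = (x₁,…,xₙ) ∈ ℤⁿ be nonzero with g = gcd(x₁,…,xₙ). If d + 1 > 2^{(n−2)/4} · (‖x‖₂ / g)^{1/(n−1)}, then there exists a nonzero c ∈ ℤⁿ with |cᵢ| ≤ d for all i and Σ_{i=1}^n cᵢxᵢ = 0. -/
/-!
Write `x = g • y` with `g = gcd x`, so that `‖x‖₂ / g = ‖y‖₂` and every integer relation of `y`
is one of `x`. Raising the hypothesis to the power `4 (n - 1)` turns it into the integer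
inequality `2 ^ ((n - 2) (n - 1)) ‖y‖₂⁴ < (d + 1) ^ (4 (n - 1))`.

* `n = 2`: `(y₁, -y₀)` is a relation of the same length as `y`.
* `n = 3`: a shortest nonzero vector `v` of the plane lattice `y^⊥ ∩ ℤ³` is primitive, so by the
  triple product expansion some `u` satisfies `v × u = y`; reducing `u` modulo `v` (Gauss) and
  applying Lagrange's identity `‖v × u‖² = ‖v‖²‖u‖² - (v ⬝ u)²` gives `3 ‖v‖⁴ ≤ 4 ‖y‖²`.
* `n ≥ 4`: now `n ≤ 2 ^ ((n - 2) (n - 1) / 2)`, so by Cauchy–Schwarz `∑ |yᵢ| < (d + 1) ^ (n - 1)`,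
  and the pigeonhole principle applies: the `(d + 1) ^ n` vectors of `{0, …, d}ⁿ` have at most
  `d ∑ |yᵢ| + 1` dot products with `y`, so two of them differ by a relation.
-/

open Real Matrix

theorem Int.exists_two_mul_abs_sub_mul_le (m : ℤ) {N : ℤ} (hN : 0 < N) :
    ∃ k : ℤ, 2 * |m - k * N| ≤ N := by
  refine ⟨(2 * m + N) / (2 * N), ?_⟩
  have hq := Int.ediv_mul_add_emod (2 * m + N) (2 * N)
  have hr₀ := Int.emod_nonneg (2 * m + N) (by positivity : 2 * N ≠ 0)
  have hr₁ := Int.emod_lt_of_pos (2 * m + N) (by positivity : 0 < 2 * N)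
  rw [show 2 * |m - (2 * m + N) / (2 * N) * N| = |2 * (m - (2 * m + N) / (2 * N) * N)| by
    simp [abs_mul], abs_le]
  constructor <;> linarith

theorem mul_min_zero_le_mul_le_mul_max_zero {α : Type*} [CommRing α] [LinearOrder α]
    [IsStrictOrderedRing α] {c d y : α} (hc₀ : 0 ≤ c) (hcd : c ≤ d) :
    d * min y 0 ≤ c * y ∧ c * y ≤ d * max y 0 := by
  rcases le_total y 0 with hy | hy
  · simp only [min_eq_left hy, max_eq_right hy]; constructor <;> nlinarith
  · simp only [min_eq_right hy, max_eq_left hy]; constructor <;> nlinarith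

section IntegerVectors

variable {ι : Type*} [Fintype ι]

theorem Int.dotProduct_self_nonneg (v : ι → ℤ) : 0 ≤ v ⬝ᵥ v :=
  Fintype.sum_nonneg fun i ↦ mul_self_nonneg (v i)

theorem Int.dotProduct_self_pos {v : ι → ℤ} (hv : v ≠ 0) : 0 < v ⬝ᵥ v := by
  simpa using dotProduct_self_star_pos_iff.mpr hv

theorem Int.abs_le_of_dotProduct_self_lt {c : ι → ℤ} {d : ℤ} (hd : 0 ≤ d)
    (h : c ⬝ᵥ c < (d + 1) ^ 2) (i : ι) : |c i| ≤ d := by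
  have hi : c i ^ 2 ≤ c ⬝ᵥ c := by
    rw [sq]
    exact Finset.single_le_sum (f := fun j ↦ c j * c j) (fun j _ ↦ mul_self_nonneg (c j))
      (Finset.mem_univ i)
  exact Int.lt_add_one_iff.mp (abs_lt_of_sq_lt_sq (hi.trans_lt h) (by omega))

theorem Int.gcd_pos_and_exists_eq_gcd_smul [Nonempty ι] {x : ι → ℤ} (hx : x ≠ 0) :
    0 < Finset.univ.gcd x ∧ ∃ y ≠ 0, x = Finset.univ.gcd x • y := by
  obtain ⟨y, hxy, -⟩ := Finset.extract_gcd x Finset.univ_nonempty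
  replace hxy : x = Finset.univ.gcd x • y := funext fun i ↦ hxy i (Finset.mem_univ i)
  refine ⟨lt_of_le_of_ne (Int.nonneg_of_normalize_eq_self Finset.normalize_gcd) fun hg ↦ hx ?_,
    y, fun hy ↦ hx ?_, hxy⟩
  · rw [hxy, ← hg, zero_smul]
  · rw [hxy, hy, smul_zero]

theorem sqrt_sum_sq_div_eq_sqrt_dotProduct_self {x y : ι → ℤ} {g : ℤ} (hg : 0 < g)
    (hxy : x = g • y) : √(∑ i, (x i : ℝ) ^ 2) / g = √((y ⬝ᵥ y : ℤ) : ℝ) := by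
  have : ∑ i, (x i : ℝ) ^ 2 = (g : ℝ) ^ 2 * (y ⬝ᵥ y : ℤ) := by
    rw [hxy]
    push_cast [dotProduct, Finset.mul_sum]
    exact Finset.sum_congr rfl fun i _ ↦ by simp; ring
  rw [this, sqrt_mul (by positivity), sqrt_sq (by positivity)]
  field_simp

theorem exists_ne_zero_abs_le_dotProduct_eq_zero_of_mul_sum_abs_lt (y : ι → ℤ) {d : ℤ}
    (hd : 0 ≤ d) (h : d * ∑ i, |y i| + 1 < (d + 1) ^ Fintype.card ι) :
    ∃ c : ι → ℤ, c ≠ 0 ∧ (∀ i, |c i| ≤ d) ∧ c ⬝ᵥ y = 0 := by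
  classical
  set A := ∑ i, d * min (y i) 0
  set B := ∑ i, d * max (y i) 0
  have hBA : B - A = d * ∑ i, |y i| := by
    simp only [B, A, ← Finset.sum_sub_distrib, Finset.mul_sum, ← mul_sub, max_sub_min_eq_abs',
      sub_zero]
  have hmaps : Set.MapsTo (· ⬝ᵥ y) (Fintype.piFinset fun _ : ι ↦ Finset.Icc 0 d : Set (ι → ℤ))
      (Finset.Icc A B) := by
    intro c hc
    simp only [Finset.mem_coe, Fintype.mem_piFinset, Finset.mem_Icc] at hc
    have hterm i := mul_min_zero_le_mul_le_mul_max_zero (y := y i) (hc i).1 (hc i).2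
    exact Finset.mem_Icc.mpr ⟨Finset.sum_le_sum fun i _ ↦ (hterm i).1,
      Finset.sum_le_sum fun i _ ↦ (hterm i).2⟩
  have hcard : (Finset.Icc A B).card < (Fintype.piFinset fun _ : ι ↦ Finset.Icc 0 d).card := by
    rw [Int.card_Icc, Fintype.card_piFinset, Finset.prod_const, Int.card_Icc, Finset.card_univ]
    have hsum : 0 ≤ d * ∑ i, |y i| := by positivity
    zify
    rw [Int.toNat_of_nonneg (by omega), Int.toNat_of_nonneg (by omega), sub_zero]
    linarith
  obtain ⟨c₁, hc₁, c₂, hc₂, hne, heq⟩ := Finset.exists_ne_map_eq_of_card_lt_of_maps_to hcard hmaps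
  simp only [Fintype.mem_piFinset, Finset.mem_Icc] at hc₁ hc₂
  refine ⟨c₁ - c₂, sub_ne_zero.mpr hne, fun i ↦ ?_, ?_⟩
  · obtain ⟨h₁, h₁'⟩ := hc₁ i
    obtain ⟨h₂, h₂'⟩ := hc₂ i
    rw [Pi.sub_apply, abs_le]; constructor <;> linarith
  · rw [sub_dotProduct, heq, sub_self]

def IsShortestOrthogonal (a v : ι → ℤ) : Prop :=
  v ≠ 0 ∧ v ⬝ᵥ a = 0 ∧ ∀ w : ι → ℤ, w ≠ 0 → w ⬝ᵥ a = 0 → v ⬝ᵥ v ≤ w ⬝ᵥ w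

theorem exists_isShortestOrthogonal {a : ι → ℤ} (h : ∃ w ≠ 0, w ⬝ᵥ a = 0) :
    ∃ v, IsShortestOrthogonal a v := by
  obtain ⟨v, ⟨hv0, hva⟩, hmin⟩ :=
    (measure fun w : ι → ℤ ↦ (w ⬝ᵥ w).toNat).wf.has_min {w | w ≠ 0 ∧ w ⬝ᵥ a = 0} h
  refine ⟨v, hv0, hva, fun w hw0 hwa ↦ ?_⟩
  have hvw : ¬(w ⬝ᵥ w).toNat < (v ⬝ᵥ v).toNat := hmin w ⟨hw0, hwa⟩
  have hv := Int.dotProduct_self_nonneg v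
  have hw := Int.dotProduct_self_nonneg w
  omega

/-- If `e` is the gcd of the entries of `v`, then `v / e` is a shorter orthogonal vector unless
`e = 1`; Bézout then gives `s`. -/
theorem IsShortestOrthogonal.exists_dotProduct_eq_one [Nonempty ι] {a v : ι → ℤ}
    (hv : IsShortestOrthogonal a v) : ∃ s, v ⬝ᵥ s = 1 := by
  obtain ⟨hv0, hva, hmin⟩ := hv
  set e := Finset.univ.gcd v
  obtain ⟨s, hs⟩ := Finset.gcd_eq_sum_mul Finset.univ v
  obtain ⟨w, hw, -⟩ := Finset.extract_gcd v Finset.univ_nonempty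
  have hvw : v = e • w := funext fun i ↦ hw i (Finset.mem_univ i)
  have hw0 : w ≠ 0 := by rintro rfl; simp [hvw] at hv0
  have he0 : e ≠ 0 := by rintro he; simp [hvw, he] at hv0
  have hwa : w ⬝ᵥ a = 0 := by
    rw [hvw, smul_dotProduct, smul_eq_mul] at hva
    exact (mul_eq_zero.mp hva).resolve_left he0
  have hle := hmin w hw0 hwa
  rw [hvw, smul_dotProduct, dotProduct_smul, smul_eq_mul, smul_eq_mul] at hle
  have hw_pos := Int.dotProduct_self_pos hw0
  refine ⟨e • s, ?_⟩
  rw [dotProduct_smul, smul_eq_mul, dotProduct, ← hs]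
  have he_sq : 0 < e * e := mul_self_pos.mpr he0
  nlinarith

end IntegerVectors

section FinThree

theorem exists_ne_zero_dotProduct_eq_zero_fin_three (a : Fin 3 → ℤ) :
    ∃ w ≠ 0, w ⬝ᵥ a = 0 := by
  by_cases ha : a 0 = 0
  · exact ⟨Pi.single 0 1, by simp, by simp [ha]⟩
  · refine ⟨![a 1, -a 0, 0], fun h ↦ ha ?_, ?_⟩
    · simpa using congrFun h 1
    · simp [dotProduct, Fin.sum_univ_three]; ring

/-- `a ⨯₃ s` is sent to `a` by `v ⨯₃ ·` (triple product expansion); subtracting the right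
multiple of `v` makes it nearly orthogonal to `v`. -/
theorem exists_cross_eq_two_mul_abs_dotProduct_le {a v s : Fin 3 → ℤ} (hva : v ⬝ᵥ a = 0)
    (hvs : v ⬝ᵥ s = 1) : ∃ u, v ⨯₃ u = a ∧ 2 * |v ⬝ᵥ u| ≤ v ⬝ᵥ v := by
  have hv : v ≠ 0 := by rintro rfl; simp at hvs
  obtain ⟨k, hk⟩ := Int.exists_two_mul_abs_sub_mul_le (v ⬝ᵥ a ⨯₃ s) (Int.dotProduct_self_pos hv)
  refine ⟨a ⨯₃ s - k • v, ?_, ?_⟩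
  · rw [map_sub, map_smul, cross_self, smul_zero, sub_zero, cross_cross_eq_smul_sub_smul', hvs,
      dotProduct_comm, hva, one_smul, zero_smul, sub_zero]
  · rwa [dotProduct_sub, dotProduct_smul, smul_eq_mul]

/-- Hermite's constant of the plane: combine Lagrange's identity for `a = v ⨯₃ u` with
`‖v‖ ≤ ‖u‖` and `2 |v ⬝ᵥ u| ≤ ‖v‖²`. -/
theorem IsShortestOrthogonal.three_mul_sq_le {a v : Fin 3 → ℤ} (ha : a ≠ 0)
    (hv : IsShortestOrthogonal a v) : 3 * (v ⬝ᵥ v) ^ 2 ≤ 4 * (a ⬝ᵥ a) := by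
  obtain ⟨s, hs⟩ := hv.exists_dotProduct_eq_one
  obtain ⟨-, hva, hmin⟩ := hv
  obtain ⟨u, rfl, hu⟩ := exists_cross_eq_two_mul_abs_dotProduct_le hva hs
  have hu0 : u ≠ 0 := by rintro rfl; simp at ha
  have hvu := hmin u hu0 (dot_cross_self v u)
  have lagrange := cross_dot_cross v u v u
  rw [dotProduct_comm u v] at lagrange
  have habs := abs_mul_abs_self (v ⬝ᵥ u)
  nlinarith [Int.dotProduct_self_nonneg v, abs_nonneg (v ⬝ᵥ u)]

theorem exists_ne_zero_dotProduct_eq_zero_three_mul_sq_le {a : Fin 3 → ℤ} (ha : a ≠ 0) :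
    ∃ v ≠ 0, v ⬝ᵥ a = 0 ∧ 3 * (v ⬝ᵥ v) ^ 2 ≤ 4 * (a ⬝ᵥ a) := by
  obtain ⟨v, hv⟩ := exists_isShortestOrthogonal (exists_ne_zero_dotProduct_eq_zero_fin_three a)
  exact ⟨v, hv.1, hv.2.1, hv.three_mul_sq_le ha⟩

end FinThree

theorem exists_ne_zero_dotProduct_eq_zero_fin_two {y : Fin 2 → ℤ} (hy : y ≠ 0) :
    ∃ c ≠ 0, c ⬝ᵥ y = 0 ∧ c ⬝ᵥ c = y ⬝ᵥ y := by
  refine ⟨![y 1, -y 0], fun h ↦ hy ?_, ?_, ?_⟩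
  · have h₀ := congrFun h 0; have h₁ := congrFun h 1
    simp only [Matrix.cons_val_zero, Matrix.cons_val_one, Pi.zero_apply, neg_eq_zero] at h₀ h₁
    ext i; fin_cases i <;> simp [h₀, h₁]
  all_goals simp [dotProduct, Fin.sum_univ_two]; ring

theorem two_pow_mul_sq_lt_of_mul_sqrt_rpow_lt {n : ℕ} (hn : 2 ≤ n) {q e : ℝ} (hq : 0 ≤ q)
    (h : 2 ^ (((n : ℝ) - 2) / 4) * √q ^ ((1 : ℝ) / ((n : ℝ) - 1)) < e) :
    2 ^ ((n - 2) * (n - 1)) * q ^ 2 < e ^ (4 * (n - 1)) := by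
  have hn₁ : (n : ℝ) - 1 ≠ 0 := by
    have : (2 : ℝ) ≤ n := by exact_mod_cast hn
    linarith
  have h₂ : ((n : ℝ) - 2) / 4 * ((4 * (n - 1) : ℕ) : ℝ) = ((n - 2) * (n - 1) : ℕ) := by
    push_cast [Nat.cast_sub (by omega : 2 ≤ n), Nat.cast_sub (by omega : 1 ≤ n)]
    ring
  have h₄ : 1 / ((n : ℝ) - 1) * ((4 * (n - 1) : ℕ) : ℝ) = (2 * 2 : ℕ) := by
    push_cast [Nat.cast_sub (by omega : 1 ≤ n)]
    field_simp
  refine lt_of_eq_of_lt ?_ (pow_lt_pow_left₀ h (by positivity) (by omega : 4 * (n - 1) ≠ 0))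
  rw [mul_pow, ← rpow_mul_natCast (by norm_num), ← rpow_mul_natCast (sqrt_nonneg q), h₂, h₄,
    rpow_natCast, rpow_natCast, pow_mul √q, sq_sqrt hq]

theorem sq_le_two_pow_mul_sub_two_mul_sub_one {n : ℕ} (hn : 4 ≤ n) :
    n ^ 2 ≤ 2 ^ ((n - 2) * (n - 1)) :=
  calc n ^ 2 ≤ (2 ^ (n - 1)) ^ 2 := by
        gcongr; have := Nat.lt_two_pow_self (n := n - 1); omega
    _ = 2 ^ (2 * (n - 1)) := by rw [← pow_mul, mul_comm]
    _ ≤ 2 ^ ((n - 2) * (n - 1)) := Nat.pow_le_pow_right two_pos (by gcongr; omega)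

theorem sum_abs_lt_pow_of_two_pow_mul_sq_lt {n : ℕ} (hn : 4 ≤ n) {d : ℤ} (hd : 0 < d)
    {y : Fin n → ℤ} (h : 2 ^ ((n - 2) * (n - 1)) * (y ⬝ᵥ y) ^ 2 < (d + 1) ^ (4 * (n - 1))) :
    ∑ i, |y i| < (d + 1) ^ (n - 1) := by
  have hCS : (∑ i, |y i|) ^ 2 ≤ n * (y ⬝ᵥ y) := by
    simpa [sq_abs, dotProduct, sq] using
      sq_sum_le_card_mul_sum_sq (s := Finset.univ) (f := fun i ↦ |y i|)
  have hn₂ : (n : ℤ) ^ 2 ≤ 2 ^ ((n - 2) * (n - 1)) := by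
    exact_mod_cast sq_le_two_pow_mul_sub_two_mul_sub_one hn
  refine lt_of_pow_lt_pow_left₀ 4 (by positivity) ?_
  calc (∑ i, |y i|) ^ 4 = ((∑ i, |y i|) ^ 2) ^ 2 := by ring
    _ ≤ (n * (y ⬝ᵥ y)) ^ 2 := by gcongr
    _ = n ^ 2 * (y ⬝ᵥ y) ^ 2 := by ring
    _ ≤ 2 ^ ((n - 2) * (n - 1)) * (y ⬝ᵥ y) ^ 2 := by gcongr
    _ < ((d + 1) ^ (n - 1)) ^ 4 := by rwa [← pow_mul, mul_comm (n - 1)]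

theorem exists_ne_zero_abs_le_dotProduct_eq_zero_of_two_pow_mul_sq_lt {n : ℕ} (hn : 2 ≤ n)
    {d : ℤ} (hd : 0 < d) {y : Fin n → ℤ} (hy : y ≠ 0)
    (h : 2 ^ ((n - 2) * (n - 1)) * (y ⬝ᵥ y) ^ 2 < (d + 1) ^ (4 * (n - 1))) :
    ∃ c ≠ 0, (∀ i, |c i| ≤ d) ∧ c ⬝ᵥ y = 0 := by
  obtain rfl | rfl | hn₄ : n = 2 ∨ n = 3 ∨ 4 ≤ n := by omega
  · obtain ⟨c, hc0, hcy, hcc⟩ := exists_ne_zero_dotProduct_eq_zero_fin_two hy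
    refine ⟨c, hc0, Int.abs_le_of_dotProduct_self_lt hd.le ?_, hcy⟩
    rw [hcc]
    refine lt_of_pow_lt_pow_left₀ 2 (by positivity) ?_
    simpa [← pow_mul] using h
  · obtain ⟨c, hc0, hcy, hcc⟩ := exists_ne_zero_dotProduct_eq_zero_three_mul_sq_le hy
    refine ⟨c, hc0, Int.abs_le_of_dotProduct_self_lt hd.le ?_, hcy⟩
    have hy₂ : 2 * (y ⬝ᵥ y) < (d + 1) ^ 4 :=
      lt_of_pow_lt_pow_left₀ 2 (by positivity) (by norm_num at h ⊢; linarith)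
    refine lt_of_pow_lt_pow_left₀ 2 (by positivity) ?_
    calc (c ⬝ᵥ c) ^ 2 < (d + 1) ^ 4 := by linarith [pow_pos (by omega : 0 < d + 1) 4]
      _ = ((d + 1) ^ 2) ^ 2 := by ring
  · have hL := sum_abs_lt_pow_of_two_pow_mul_sq_lt hn₄ hd h
    have hL₀ : 0 ≤ ∑ i, |y i| := Finset.sum_nonneg fun i _ ↦ abs_nonneg (y i)
    have hpow : (d + 1) ^ n = (d + 1) * (d + 1) ^ (n - 1) := by
      rw [← pow_succ']; congr 1; omega
    refine exists_ne_zero_abs_le_dotProduct_eq_zero_of_mul_sum_abs_lt y hd.le ?_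
    rw [Fintype.card_fin, hpow]
    nlinarith [mul_le_mul_of_nonneg_left (Int.add_one_le_iff.mpr hL) (by omega : 0 ≤ d + 1)]

/-- LLL regime: if `d + 1 > 2^((n-2)/4) · (‖x‖₂ / gcd(x))^(1/(n-1))` then there is
a nonzero `c ∈ {-d,…,d}ⁿ` with `∑ i, cᵢ xᵢ = 0`. -/
theorem subset_balancing_lll_regime (n : ℕ) (hn : 2 ≤ n)
    (d : ℤ) (hd : 0 < d) (x : Fin n → ℤ) (hx : x ≠ 0)
    (h : (2 : ℝ) ^ (((n : ℝ) - 2) / 4) *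
          (Real.sqrt (∑ i, (x i : ℝ) ^ 2) / ((Finset.univ.gcd x : ℤ) : ℝ))
            ^ ((1 : ℝ) / ((n : ℝ) - 1))
        < (d : ℝ) + 1) :
    ∃ c : Fin n → ℤ, c ≠ 0 ∧ (∀ i, |c i| ≤ d) ∧ ∑ i, c i * x i = 0 := by
  have : Nonempty (Fin n) := ⟨⟨0, by omega⟩⟩
  obtain ⟨hg, y, hy, hxy⟩ := Int.gcd_pos_and_exists_eq_gcd_smul hx
  rw [sqrt_sum_sq_div_eq_sqrt_dotProduct_self hg hxy] at h
  have hQ := two_pow_mul_sq_lt_of_mul_sqrt_rpow_lt hn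
    (Int.cast_nonneg_iff.mpr (Int.dotProduct_self_nonneg y)) h
  obtain ⟨c, hc0, hcd, hcy⟩ :=
    exists_ne_zero_abs_le_dotProduct_eq_zero_of_two_pow_mul_sq_lt hn hd hy (by exact_mod_cast hQ)
  refine ⟨c, hc0, hcd, ?_⟩
  change c ⬝ᵥ x = 0
  rw [hxy, dotProduct_smul, hcy, smul_zero]
end

section
/- Let n ≥ 1, let d be a positive integer, let x = (x₁,…,xₙ) ∈ ℤⁿ, let i₀ be an index with x_{i₀} ≠ 0, and let q be an integer with q > d·Σ_{i=1}^n |xᵢ|. Let L = L⊥ₓ + ℤ·(q·e_{i₀}) ⊆ ℤⁿ, where e_{i₀} is the i₀-th standard basis vector. Then (i) L is a free ℤ-module of rank n, and (ii) for every set K ⊆ [−d, d]ⁿ one has L ∩ K = L⊥ₓ ∩ K; in particular, K contains a nonzero integer vector c with Σᵢ cᵢxᵢ = 0 if and only if L ∩ K contains a nonzero vector. -/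
/-- Embedding the rank-`(n-1)` kernel lattice `L⊥ₓ` into the full-rank lattice
`L = L⊥ₓ + ℤ·(q e_{i₀})`: `L` is free of rank `n`, and inside any set
`K ⊆ [-d,d]ⁿ` the lattices `L` and `L⊥ₓ` have the same points. -/
theorem full_rank_embedding (n : ℕ) (hn : 1 ≤ n)
    (d : ℤ) (hd : 0 < d) (x : Fin n → ℤ)
    (i₀ : Fin n) (hx : x i₀ ≠ 0)
    (q : ℤ) (hq : d * ∑ i, |x i| < q)
    (Kperp L : Submodule ℤ (Fin n → ℤ))
    (hKperp : ∀ c : Fin n → ℤ, c ∈ Kperp ↔ ∑ i, c i * x i = 0)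
    (hL : ∀ c : Fin n → ℤ,
      c ∈ L ↔ ∃ c' ∈ Kperp, ∃ m : ℤ, c = c' + m • q • Pi.single i₀ (1 : ℤ))
    (K : Set (Fin n → ℝ)) (hK : K ⊆ {y | ∀ i, |y i| ≤ (d : ℝ)}) :
    (Module.Free ℤ L ∧ Module.finrank ℤ L = n) ∧
    (∀ c : Fin n → ℤ, (fun i => (c i : ℝ)) ∈ K → (c ∈ L ↔ c ∈ Kperp)) ∧
    ((∃ c : Fin n → ℤ, c ≠ 0 ∧ (fun i => (c i : ℝ)) ∈ K ∧ ∑ i, c i * x i = 0) ↔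
      (∃ c : Fin n → ℤ, c ≠ 0 ∧ c ∈ L ∧ (fun i => (c i : ℝ)) ∈ K)) := by
  classical
  have hxabs : (1 : ℤ) ≤ |x i₀| := Int.one_le_abs hx
  have hq0 : 0 < q := by
    have h1 : (0 : ℤ) ≤ ∑ i, |x i| := Finset.sum_nonneg fun i _ => abs_nonneg _
    nlinarith
  have ha : q * x i₀ ≠ 0 := mul_ne_zero (ne_of_gt hq0) hx
  -- Kperp ≤ L
  have hKL : Kperp ≤ L := by
    intro c hc
    exact (hL c).2 ⟨c, hc, 0, by simp⟩
  -- a full-rank scaled standard basis inside L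
  set a : ℤ := q * x i₀ with ha_def
  have hmem : ∀ i : Fin n, Pi.single i a ∈ L := by
    intro i
    by_cases hii : i = i₀
    · subst hii
      refine (hL _).2 ⟨0, Kperp.zero_mem, x i, ?_⟩
      funext j
      simp [Pi.single_apply, smul_eq_mul]
      split_ifs <;> ring
    · refine (hL _).2 ⟨Pi.single i a - Pi.single i₀ (q * x i), ?_, x i, ?_⟩
      · rw [hKperp]
        have : ∀ j, (Pi.single i a - Pi.single i₀ (q * x i) : Fin n → ℤ) j * x j
            = (if j = i then a * x i else 0) - (if j = i₀ then q * x i * x i₀ else 0) := by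
          intro j
          simp only [Pi.sub_apply, Pi.single_apply, sub_mul]
          split_ifs with h1 h2
          · subst h1; exact absurd h2 hii
          · subst h1; ring
          · subst ‹j = i₀›; ring
          · ring
        rw [Finset.sum_congr rfl fun j _ => this j, Finset.sum_sub_distrib]
        simp [Finset.sum_ite_eq', ha_def]
        ring
      · funext j
        simp [Pi.single_apply, smul_eq_mul]
        split_ifs with h1 h2
        · exact absurd (h1.symm.trans h2) hii
        · ring
        · ring
        · ring
  have hLI : LinearIndependent ℤ (fun i : Fin n => (⟨Pi.single i a, hmem i⟩ : L)) := by
    apply LinearIndependent.of_comp L.subtype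
    rw [Fintype.linearIndependent_iff]
    intro g hg i
    have := congrFun hg i
    simp [Pi.single_apply, Finset.sum_apply, smul_eq_mul, mul_ite,
      Finset.sum_ite_eq] at this
    rcases this with h | h
    · exact h
    · exact absurd h ha
  have hfree : Module.Free ℤ L := inferInstance
  have hrank : Module.finrank ℤ L = n := by
    refine le_antisymm ?_ ?_
    · have := Submodule.finrank_le L
      simpa using this
    · have := hLI.fintype_card_le_finrank
      simpa using this
  -- the key coincidence on K
  have key : ∀ c : Fin n → ℤ, (fun i => (c i : ℝ)) ∈ K → c ∈ L → c ∈ Kperp := by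
    intro c hcK hcL
    obtain ⟨c', hc', m, hcm⟩ := (hL c).1 hcL
    have hbound : ∀ i, |c i| ≤ d := by
      intro i
      have := hK hcK i
      exact_mod_cast this
    have hsum : ∑ i, c i * x i = m * q * x i₀ := by
      rw [hcm]
      have : ∀ j, ((c' + m • q • Pi.single i₀ (1 : ℤ) : Fin n → ℤ)) j * x j
          = c' j * x j + (if j = i₀ then m * q * x i₀ else 0) := by
        intro j
        simp only [Pi.add_apply, Pi.smul_apply, smul_eq_mul, Pi.single_apply, add_mul,
          mul_ite, mul_one, mul_zero]
        split_ifs with h1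
        · subst h1; ring
        · ring
      rw [Finset.sum_congr rfl fun j _ => this j, Finset.sum_add_distrib,
        Finset.sum_ite_eq']
      simp [(hKperp c').1 hc']
    have habs : |∑ i, c i * x i| ≤ d * ∑ i, |x i| := by
      calc |∑ i, c i * x i| ≤ ∑ i, |c i * x i| := Finset.abs_sum_le_sum_abs _ _
        _ ≤ ∑ i, d * |x i| := by
            apply Finset.sum_le_sum
            intro i _
            rw [abs_mul]
            exact mul_le_mul_of_nonneg_right (hbound i) (abs_nonneg _)
        _ = d * ∑ i, |x i| := by rw [Finset.mul_sum]
    have hm : m = 0 := by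
      by_contra hm0
      have h1 : (1 : ℤ) ≤ |m| := Int.one_le_abs hm0
      have : q ≤ |m * q * x i₀| := by
        rw [abs_mul, abs_mul, abs_of_pos hq0]
        have h2 : q ≤ |m| * q := le_mul_of_one_le_left hq0.le h1
        have h3 : |m| * q ≤ |m| * q * |x i₀| :=
          le_mul_of_one_le_right (by positivity) hxabs
        linarith
      rw [← hsum] at this
      linarith
    rw [hcm, hm]
    simpa using hc'
  have keyiff : ∀ c : Fin n → ℤ, (fun i => (c i : ℝ)) ∈ K → (c ∈ L ↔ c ∈ Kperp) :=
    fun c hc => ⟨key c hc, fun h => hKL h⟩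
  refine ⟨⟨hfree, hrank⟩, keyiff, ?_⟩
  constructor
  · rintro ⟨c, hc0, hcK, hcs⟩
    exact ⟨c, hc0, hKL ((hKperp c).2 hcs), hcK⟩
  · rintro ⟨c, hc0, hcL, hcK⟩
    exact ⟨c, hc0, hcK, (hKperp c).1 (key c hcK hcL)⟩
end

section
/- Let n ≥ 1, let d be a positive integer, let x = (x₁,…,xₙ) ∈ ℤⁿ, let τ ∈ ℤ, and let α, q be integers with α > d and q > d·Σ_{i=1}^n |xᵢ| + |τ|. Let t = (ατ, 0, …, 0) ∈ ℤ^{n+1}. Then L_{α,q} ∩ { v : ‖v − t‖∞ ≤ d } = { (ατ, c₁, …, cₙ) : c ∈ ℤⁿ, Σ_{i=1}^n cᵢxᵢ = τ, and |cᵢ| ≤ d for all i }. -/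
lemma int_norm_le_iff (m d : ℤ) : ‖m‖ ≤ (d : ℝ) ↔ |m| ≤ d := by
  rw [Int.norm_eq_abs, ← Int.cast_abs, Int.cast_le]

/-- If `α > d` and `q > d ∑ |xᵢ| + |τ|`, with target `t = (ατ, 0, …, 0)`, the
lattice points of `L_{α,q}` within ℓ∞-distance `d` of `t` are exactly the vectors
`(ατ, c)` with `∑ cᵢ xᵢ = τ` and `|cᵢ| ≤ d`. -/
theorem latticeSet_inter_target_ball (n : ℕ) (hn : 1 ≤ n)
    (d : ℤ) (hd : 0 < d) (x : Fin n → ℤ) (τ : ℤ)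
    (α q : ℤ) (hα : d < α) (hq : d * (∑ i, |x i|) + |τ| < q) :
    latticeSet n x α q ∩
        {v | ‖v - Fin.cons (α * τ) (0 : Fin n → ℤ)‖ ≤ (d : ℝ)}
      = {v | ∃ c : Fin n → ℤ,
          v = Fin.cons (α * τ) c ∧ (∑ i, c i * x i = τ) ∧ ∀ i, |c i| ≤ d} := by
  have hdR : (0 : ℝ) ≤ (d : ℝ) := by exact_mod_cast hd.le
  have hq0 : 0 < q := lt_of_le_of_lt (by positivity) hq
  ext v
  constructor
  · rintro ⟨⟨z₀, z, rfl⟩, hv⟩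
    have hnorm := (pi_norm_le_iff_of_nonneg hdR).mp hv
    have h0 : |α * (q * z₀ + ∑ i, z i * x i) - α * τ| ≤ d := by
      have := hnorm 0
      simpa [int_norm_le_iff] using this
    have hi : ∀ i, |z i| ≤ d := by
      intro i
      have := hnorm i.succ
      simpa [int_norm_le_iff] using this
    set S := ∑ i, z i * x i with hS
    -- first step: q * z₀ + S = τ
    have h1 : q * z₀ + S = τ := by
      by_contra hne
      have h2 : (1 : ℤ) ≤ |q * z₀ + S - τ| := Int.one_le_abs (sub_ne_zero.mpr hne)
      have h3 : |α| ≤ |α * (q * z₀ + S - τ)| := by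
        rw [abs_mul]
        nlinarith [abs_nonneg α]
      have h4 : α * (q * z₀ + S) - α * τ = α * (q * z₀ + S - τ) := by ring
      rw [h4] at h0
      have : α ≤ d := le_trans (le_trans (le_abs_self α) h3) h0
      omega
    -- second step: z₀ = 0
    have hSbound : |S| ≤ d * ∑ i, |x i| := by
      calc |S| ≤ ∑ i, |z i * x i| := Finset.abs_sum_le_sum_abs _ _
        _ ≤ ∑ i, d * |x i| := by
            refine Finset.sum_le_sum fun i _ => ?_
            rw [abs_mul]
            exact mul_le_mul_of_nonneg_right (hi i) (abs_nonneg _)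
        _ = d * ∑ i, |x i| := by rw [Finset.mul_sum]
    have hz0 : z₀ = 0 := by
      by_contra hz
      have h5 : |q| ≤ |q * z₀| := by
        rw [abs_mul]
        nlinarith [abs_nonneg q, Int.one_le_abs hz]
      have h6 : q * z₀ = τ - S := by omega
      have h7 : |τ - S| ≤ |τ| + |S| := abs_sub _ _
      have : q ≤ d * (∑ i, |x i|) + |τ| := by
        have := le_trans (le_trans (le_abs_self q) h5) (h6 ▸ h7)
        omega
      omega
    subst hz0
    rw [mul_zero, zero_add] at h1
    exact ⟨z, by rw [mul_zero, zero_add, h1], h1, hi⟩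
  · rintro ⟨c, rfl, hsum, hle⟩
    refine ⟨⟨0, c, by simp [hsum]⟩, ?_⟩
    apply (pi_norm_le_iff_of_nonneg hdR).mpr
    intro i
    refine Fin.cases ?_ ?_ i
    · simpa using hdR
    · intro j
      simpa [int_norm_le_iff] using hle j
end

section
/- Let n ≥ 1, let d be a positive integer, let x = (x₁,…,xₙ) ∈ ℤⁿ, let τ ∈ ℤ, set α = d + 1, q = d·Σ_{i=1}^n |xᵢ| + |τ| + 1, and t = (ατ, 0, …, 0) ∈ ℤ^{n+1}. Then exactly one of the following holds: either there exists c ∈ ℤⁿ with |cᵢ| ≤ d for all i and Σᵢ cᵢxᵢ = τ, in which case some v ∈ L_{α,q} satisfies ‖v − t‖∞ ≤ d; or no such c exists, in which case every v ∈ L_{α,q} satisfies ‖v − t‖∞ ≥ d + 1. -/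
/-- Distance gap for the GSS-to-CVP∞ reduction with `C = {-d,…,d}`: with
`α = d+1`, `q = d ∑ |xᵢ| + |τ| + 1` and target `t = (ατ, 0, …, 0)`, either a
solution `c` exists and some lattice vector is within ℓ∞-distance `d` of `t`, or
no solution exists and every lattice vector is at ℓ∞-distance at least `d+1`. -/
theorem gss_cvp_distance_gap (n : ℕ) (hn : 1 ≤ n)
    (d : ℤ) (hd : 0 < d) (x : Fin n → ℤ) (τ : ℤ) :
    ((∃ c : Fin n → ℤ, (∀ i, |c i| ≤ d) ∧ ∑ i, c i * x i = τ) →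
      ∃ v ∈ latticeSet n x (d + 1) (d * (∑ i, |x i|) + |τ| + 1),
        ‖v - Fin.cons ((d + 1) * τ) (0 : Fin n → ℤ)‖ ≤ (d : ℝ)) ∧
    ((¬ ∃ c : Fin n → ℤ, (∀ i, |c i| ≤ d) ∧ ∑ i, c i * x i = τ) →
      ∀ v ∈ latticeSet n x (d + 1) (d * (∑ i, |x i|) + |τ| + 1),
        ((d : ℝ) + 1) ≤ ‖v - Fin.cons ((d + 1) * τ) (0 : Fin n → ℤ)‖) := by
  set q : ℤ := d * (∑ i, |x i|) + |τ| + 1 with hq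
  constructor
  · rintro ⟨c, hc, hsum⟩
    refine ⟨Fin.cons ((d + 1) * (q * 0 + ∑ i, c i * x i)) c, ⟨0, c, rfl⟩, ?_⟩
    rw [pi_norm_le_iff_of_nonneg (by exact_mod_cast hd.le)]
    intro i
    induction i using Fin.cases with
    | zero =>
        simp only [Pi.sub_apply, Fin.cons_zero, hsum]
        simpa using (by exact_mod_cast hd.le : (0:ℝ) ≤ d)
    | succ j =>
        simp only [Pi.sub_apply, Fin.cons_succ, Pi.zero_apply, sub_zero,
          Int.norm_eq_abs]
        exact_mod_cast hc j
  · rintro hno v hv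
    obtain ⟨z₀, z, hv⟩ := hv
    set t : Fin (n + 1) → ℤ := Fin.cons ((d + 1) * τ) (0 : Fin n → ℤ) with ht
    by_cases hz : ∀ i, |z i| ≤ d
    · have hne : q * z₀ + ∑ i, z i * x i - τ ≠ 0 := by
        rcases eq_or_ne z₀ 0 with h0 | h0
        · subst h0
          intro h
          exact hno ⟨z, hz, by linarith [h]⟩
        · have hS : |∑ i, z i * x i| ≤ d * ∑ i, |x i| := by
            calc |∑ i, z i * x i| ≤ ∑ i, |z i * x i| := Finset.abs_sum_le_sum_abs _ _
              _ ≤ ∑ i, d * |x i| := by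
                  refine Finset.sum_le_sum fun i _ => ?_
                  rw [abs_mul]
                  exact mul_le_mul_of_nonneg_right (hz i) (abs_nonneg _)
              _ = d * ∑ i, |x i| := by rw [Finset.mul_sum]
          have hq0 : 0 < q := by positivity
          have hq1 : q ≤ |q * z₀| := by
            rw [abs_mul, abs_of_pos hq0]
            exact le_mul_of_one_le_right hq0.le (Int.one_le_abs h0)
          intro h
          have heq : |q * z₀| = |∑ i, z i * x i - τ| := by
            rw [show ∑ i, z i * x i - τ = -(q * z₀) by linarith, abs_neg]
          have h2 : |∑ i, z i * x i - τ| ≤ d * ∑ i, |x i| + |τ| := by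
            calc |∑ i, z i * x i - τ| ≤ |∑ i, z i * x i| + |τ| := abs_sub _ _
              _ ≤ _ := by linarith
          omega
      have h1 : d + 1 ≤ |(d + 1) * (q * z₀ + ∑ i, z i * x i) - (d + 1) * τ| := by
        rw [← mul_sub, abs_mul, abs_of_pos (by linarith : (0:ℤ) < d + 1)]
        nlinarith [Int.one_le_abs hne]
      refine le_trans ?_ (norm_le_pi_norm (v - t) 0)
      have hcoord : (v - t) 0 = (d + 1) * (q * z₀ + ∑ i, z i * x i) - (d + 1) * τ := by
        simp [hv, ht]
      rw [hcoord, Int.norm_eq_abs]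
      exact_mod_cast h1
    · push_neg at hz
      obtain ⟨i, hi⟩ := hz
      refine le_trans ?_ (norm_le_pi_norm (v - t) i.succ)
      have hcoord : (v - t) i.succ = z i := by simp [hv, ht]
      rw [hcoord, Int.norm_eq_abs]
      exact_mod_cast (by omega : d + 1 ≤ |z i|)
end

section
/- Let n ≥ 1, let a ≤ b be integers, set d = max(|a|, |b|), μ = (a+b)/2 ∈ ℝ and r = (b−a)/2 ∈ ℝ. Let x = (x₁,…,xₙ) ∈ ℤⁿ, τ ∈ ℤ, and let α, q be integers with α > r and q > d·Σ_{i=1}^n |xᵢ| + |τ|. Let t = (ατ, μ, …, μ) ∈ ℝ^{n+1}. Then { v ∈ L_{α,q} : ‖v − t‖∞ ≤ r } = { (ατ, c₁, …, cₙ) : c ∈ ℤⁿ, Σ_{i=1}^n cᵢxᵢ = τ, and a ≤ cᵢ ≤ b for all i }. -/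
/-- General interval `C = {a,…,b}`: with `d = max(|a|,|b|)`, `μ = (a+b)/2`,
`r = (b-a)/2`, `α > r`, `q > d ∑ |xᵢ| + |τ|` and target `t = (ατ, μ, …, μ)`, the
lattice points of `L_{α,q}` within ℓ∞-distance `r` of `t` are exactly the vectors
`(ατ, c)` with `∑ cᵢ xᵢ = τ` and `a ≤ cᵢ ≤ b`. -/
theorem latticeSet_interval_coefficients (n : ℕ) (hn : 1 ≤ n)
    (a b : ℤ) (hab : a ≤ b) (d : ℤ) (hd : d = max |a| |b|)
    (μ r : ℝ) (hμ : μ = ((a : ℝ) + b) / 2) (hr : r = ((b : ℝ) - a) / 2)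
    (x : Fin n → ℤ) (τ : ℤ)
    (α q : ℤ) (hα : r < (α : ℝ)) (hq : d * (∑ i, |x i|) + |τ| < q) :
    {v ∈ latticeSet n x α q |
        ‖(fun i => (v i : ℝ)) -
          Fin.cons ((α : ℝ) * τ) (fun _ : Fin n => μ)‖ ≤ r}
      = {v | ∃ c : Fin n → ℤ,
          v = Fin.cons (α * τ) c ∧ (∑ i, c i * x i = τ) ∧
            ∀ i, a ≤ c i ∧ c i ≤ b} := by

  subst hd hμ hr
  have habR : (a:ℝ) ≤ b := by exact_mod_cast hab
  have hr0 : (0:ℝ) ≤ ((b:ℝ) - a)/2 := by linarith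
  have hα0 : (0:ℤ) < α := by exact_mod_cast lt_of_le_of_lt hr0 hα
  have hd0 : (0:ℤ) ≤ max |a| |b| := le_trans (abs_nonneg a) (le_max_left _ _)
  have hq0 : (0:ℤ) < q := by
    have h1 : (0:ℤ) ≤ max |a| |b| * ∑ i, |x i| :=
      mul_nonneg hd0 (Finset.sum_nonneg fun i _ => abs_nonneg _)
    have := abs_nonneg τ
    linarith
  ext v
  simp only [Set.mem_setOf_eq, Set.mem_sep_iff, latticeSet]
  constructor
  · rintro ⟨⟨z₀, z, rfl⟩, hnorm⟩
    rw [pi_norm_le_iff_of_nonneg hr0] at hnorm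
    have hi : ∀ i : Fin n, |(z i : ℝ) - ((a:ℝ)+b)/2| ≤ ((b:ℝ)-a)/2 := by
      intro i
      have := hnorm i.succ
      simpa [Pi.sub_apply, Fin.cons_succ, Real.norm_eq_abs] using this
    have hzb : ∀ i, a ≤ z i ∧ z i ≤ b := by
      intro i
      have h := abs_le.mp (hi i)
      constructor
      · exact_mod_cast (by linarith [h.1] : (a:ℝ) ≤ (z i:ℝ))
      · exact_mod_cast (by linarith [h.2] : ((z i:ℝ)) ≤ (b:ℝ))
    set S : ℤ := ∑ i, z i * x i with hS
    have h0 : |((α * (q * z₀ + S) : ℤ) : ℝ) - (α:ℝ) * τ| ≤ ((b:ℝ)-a)/2 := by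
      have := hnorm 0
      simpa [Pi.sub_apply, Fin.cons_zero, Real.norm_eq_abs] using this
    have h0' : |(α:ℝ) * ((q * z₀ + S - τ : ℤ) : ℝ)| < (α:ℝ) := by
      push_cast
      push_cast at h0
      calc |(α:ℝ) * ((q:ℝ) * z₀ + S - τ)| = |(α:ℝ) * ((q:ℝ)*z₀ + S) - α * τ| := by
            ring_nf
          _ ≤ ((b:ℝ)-a)/2 := h0
          _ < α := hα
    have hM : q * z₀ + S = τ := by
      have hαR : (0:ℝ) < (α:ℝ) := by exact_mod_cast hα0
      rw [abs_mul, abs_of_pos hαR] at h0'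
      have h1 : |((q * z₀ + S - τ : ℤ) : ℝ)| < 1 := by
        by_contra hc
        push_neg at hc
        nlinarith
      have h2 : |q * z₀ + S - τ| < 1 := by exact_mod_cast h1
      have h2' : |q * z₀ + S - τ| ≤ 0 := Int.lt_add_one_iff.mp (by simpa using h2)
      have h3 := abs_nonneg (q * z₀ + S - τ)
      have h4 : q * z₀ + S - τ = 0 := abs_eq_zero.mp (le_antisymm h2' h3)
      linarith
    have hSb : |S| ≤ max |a| |b| * ∑ i, |x i| := by
      calc |S| ≤ ∑ i, |z i * x i| := Finset.abs_sum_le_sum_abs _ _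
        _ ≤ ∑ i, max |a| |b| * |x i| := by
            apply Finset.sum_le_sum
            intro i _
            rw [abs_mul]
            exact mul_le_mul_of_nonneg_right
              (abs_le_max_abs_abs (hzb i).1 (hzb i).2) (abs_nonneg _)
        _ = max |a| |b| * ∑ i, |x i| := by rw [Finset.mul_sum]
    have hz0 : z₀ = 0 := by
      have h1 : q * z₀ = τ - S := by linarith
      have h2 : |q * z₀| ≤ |τ| + |S| := by
        rw [h1]; exact (abs_sub _ _)
      have h3 : |q * z₀| < q := by
        calc |q * z₀| ≤ |τ| + |S| := h2
          _ ≤ |τ| + max |a| |b| * ∑ i, |x i| := by linarith [hSb]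
          _ < q := by linarith
      rw [abs_mul, abs_of_pos hq0] at h3
      by_contra hz
      have h4 : (1:ℤ) ≤ |z₀| := Int.one_le_abs hz
      nlinarith
    subst hz0
    simp only [mul_zero, zero_add] at hM
    refine ⟨z, ?_, hM, hzb⟩
    rw [hM]
    norm_num
  · rintro ⟨c, rfl, hsum, hbd⟩
    constructor
    · exact ⟨0, c, by simp [hsum]⟩
    · rw [pi_norm_le_iff_of_nonneg hr0]
      intro i
      refine Fin.cases ?_ ?_ i
      · simp [Pi.sub_apply, hr0]
      · intro j
        have h := hbd j
        have h1 : (a:ℝ) ≤ (c j : ℝ) := by exact_mod_cast h.1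
        have h2 : ((c j : ℝ)) ≤ b := by exact_mod_cast h.2
        simp only [Pi.sub_apply, Fin.cons_succ, Real.norm_eq_abs]
        rw [abs_le]
        constructor <;> [linarith; linarith]
end

section
/- Let n ≥ 1, let d ≥ 1 be an integer, let x = (x₁,…,xₙ) ∈ ℤⁿ, τ ∈ ℤ, set α = d + 1 and let q be an integer with q > d·Σ_{i=1}^n |xᵢ| + |τ|. Fix a sign pattern s ∈ {−1, +1}ⁿ, let t_s = (ατ, s₁·(d+1)/2, …, sₙ·(d+1)/2) ∈ ℝ^{n+1} and r = (d−1)/2. Then { v ∈ L_{α,q} : ‖v − t_s‖∞ ≤ r } = { (ατ, c₁, …, cₙ) : c ∈ ℤⁿ, Σ_{i=1}^n cᵢxᵢ = τ, and 1 ≤ sᵢcᵢ ≤ d for all i }. -/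
/-- Sign-pattern version for `C = [±d]`: with `α = d+1`, `q > d ∑ |xᵢ| + |τ|`,
sign pattern `s ∈ {±1}ⁿ`, target `t_s = (ατ, s₁(d+1)/2, …, sₙ(d+1)/2)` and
`r = (d-1)/2`, the lattice points of `L_{α,q}` within ℓ∞-distance `r` of `t_s`
are exactly the vectors `(ατ, c)` with `∑ cᵢ xᵢ = τ` and `1 ≤ sᵢ cᵢ ≤ d`. -/
theorem latticeSet_sign_pattern (n : ℕ) (hn : 1 ≤ n)
    (d : ℤ) (hd : 1 ≤ d) (x : Fin n → ℤ) (τ : ℤ)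
    (q : ℤ) (hq : d * (∑ i, |x i|) + |τ| < q)
    (s : Fin n → ℤ) (hs : ∀ i, s i = 1 ∨ s i = -1) :
    {v ∈ latticeSet n x (d + 1) q |
        ‖(fun i => (v i : ℝ)) -
          Fin.cons (((d : ℝ) + 1) * τ)
            (fun i : Fin n => (s i : ℝ) * ((d : ℝ) + 1) / 2)‖ ≤ ((d : ℝ) - 1) / 2}
      = {v | ∃ c : Fin n → ℤ,
          v = Fin.cons ((d + 1) * τ) c ∧ (∑ i, c i * x i = τ) ∧
            ∀ i, 1 ≤ s i * c i ∧ s i * c i ≤ d} := by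
  have hdR : (1:ℝ) ≤ (d:ℝ) := by exact_mod_cast hd
  have hr0 : (0:ℝ) ≤ ((d:ℝ) - 1) / 2 := by linarith
  ext v
  simp only [Set.mem_setOf_eq, Set.mem_sep_iff, latticeSet]
  constructor
  · rintro ⟨⟨z₀, z, rfl⟩, hnorm⟩
    rw [pi_norm_le_iff_of_nonneg hr0] at hnorm
    -- coordinate bounds for z
    have hz : ∀ i, 1 ≤ s i * z i ∧ s i * z i ≤ d := by
      intro i
      have h := hnorm i.succ
      simp only [Pi.sub_apply, Fin.cons_succ, Real.norm_eq_abs, abs_le] at h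
      rcases hs i with h1 | h1 <;> rw [h1] at h ⊢
      · constructor
        · have h2 : (1:ℝ) ≤ (z i : ℝ) := by push_cast at h; linarith [h.1]
          have h3 : (1:ℤ) ≤ z i := by exact_mod_cast h2
          linarith
        · have h2 : (z i : ℝ) ≤ d := by push_cast at h; linarith [h.2]
          have h3 : z i ≤ d := by exact_mod_cast h2
          linarith
      · constructor
        · have h2 : (1:ℝ) ≤ -(z i : ℝ) := by push_cast at h; linarith [h.2]
          have h3 : (1:ℤ) ≤ -z i := by exact_mod_cast h2
          linarith
        · have h2 : -(z i : ℝ) ≤ d := by push_cast at h; linarith [h.1]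
          have h3 : -z i ≤ d := by exact_mod_cast h2
          linarith
    -- coordinate 0
    have h0 := hnorm 0
    simp only [Pi.sub_apply, Fin.cons_zero, Real.norm_eq_abs] at h0
    have hS : q * z₀ + ∑ i, z i * x i = τ := by
      by_contra hne
      have h1 : (1:ℤ) ≤ |q * z₀ + ∑ i, z i * x i - τ| := by
        have := abs_pos.mpr (sub_ne_zero.mpr hne)
        omega
      have h1R : (1:ℝ) ≤ |((q * z₀ + ∑ i, z i * x i - τ : ℤ) : ℝ)| := by
        rw [← Int.cast_abs]; exact_mod_cast h1
      have : ((d:ℝ) + 1) * (q * z₀ + ∑ i, z i * x i : ℤ) - ((d:ℝ)+1) * τ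
          = ((d:ℝ) + 1) * ((q * z₀ + ∑ i, z i * x i - τ : ℤ) : ℝ) := by push_cast; ring
      rw [show ((d:ℤ)+1 : ℤ) * (q * z₀ + ∑ i, z i * x i) = ((d+1) * (q * z₀ + ∑ i, z i * x i)) from rfl] at h0
      push_cast at h0
      rw [show ((d:ℝ) + 1) * ((q:ℝ) * z₀ + ∑ i, (z i : ℝ) * x i) - ((d:ℝ)+1) * τ
          = ((d:ℝ) + 1) * (((q:ℝ) * z₀ + ∑ i, (z i : ℝ) * x i) - τ) from by ring] at h0
      rw [abs_mul] at h0
      have hd1 : |(d:ℝ) + 1| = (d:ℝ) + 1 := abs_of_pos (by linarith)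
      have hx1 : (1:ℝ) ≤ |((q:ℝ) * z₀ + ∑ i, (z i : ℝ) * x i) - τ| := by
        have : (((q * z₀ + ∑ i, z i * x i - τ : ℤ)) : ℝ)
            = ((q:ℝ) * z₀ + ∑ i, (z i : ℝ) * x i) - τ := by push_cast; ring
        rw [← this]; exact h1R
      nlinarith [h0]
    -- z₀ = 0
    have hzabs : ∀ i, |z i| ≤ d := by
      intro i
      rcases hs i with h1 | h1 <;> have h2 := hz i <;> rw [h1] at h2 <;>
        simp only [one_mul, neg_mul, neg_one_mul] at h2 <;> rw [abs_le] <;> omega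
    have hsum : |∑ i, z i * x i| ≤ d * ∑ i, |x i| := by
      calc |∑ i, z i * x i| ≤ ∑ i, |z i * x i| := Finset.abs_sum_le_sum_abs _ _
        _ ≤ ∑ i, d * |x i| := by
            apply Finset.sum_le_sum
            intro i _
            rw [abs_mul]
            exact mul_le_mul_of_nonneg_right (hzabs i) (abs_nonneg _)
        _ = d * ∑ i, |x i| := (Finset.mul_sum _ _ _).symm
    have hz0 : z₀ = 0 := by
      by_contra hne
      have hqz : q * z₀ = τ - ∑ i, z i * x i := by linarith [hS]
      have h1 : |q * z₀| ≥ |q| := by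
        rw [abs_mul]
        have : (1:ℤ) ≤ |z₀| := Int.one_le_abs hne
        nlinarith [abs_nonneg q]
      have hqpos : 0 < q := by
        have h5 : 0 ≤ d * ∑ i, |x i| := by positivity
        have h6 := abs_nonneg τ; linarith
      rw [hqz] at h1
      have h7 : |τ - ∑ i, z i * x i| ≤ |τ| + |∑ i, z i * x i| := abs_sub _ _
      rw [abs_of_pos hqpos] at h1
      linarith
    refine ⟨z, ?_, ?_, hz⟩
    · rw [hS]
    · rw [hz0, mul_zero, zero_add] at hS; exact hS
  · rintro ⟨c, rfl, hsum, hc⟩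
    refine ⟨⟨0, c, ?_⟩, ?_⟩
    · congr 1; rw [hsum]; ring
    · rw [pi_norm_le_iff_of_nonneg hr0]
      intro i
      refine Fin.cases ?_ ?_ i
      · simp only [Pi.sub_apply, Fin.cons_zero, Real.norm_eq_abs]
        simpa using hr0
      · intro j
        simp only [Pi.sub_apply, Fin.cons_succ, Real.norm_eq_abs, abs_le]
        obtain ⟨h1, h2⟩ := hc j
        rcases hs j with hsj | hsj <;> rw [hsj] at h1 h2 ⊢
        · rw [one_mul] at h1 h2
          have h1R : (1:ℝ) ≤ (c j : ℝ) := by exact_mod_cast h1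
          have h2R : (c j : ℝ) ≤ d := by exact_mod_cast h2
          push_cast
          constructor <;> linarith
        · rw [neg_mul, one_mul] at h1 h2
          have h1R : (1:ℝ) ≤ -(c j : ℝ) := by exact_mod_cast h1
          have h2R : -(c j : ℝ) ≤ d := by exact_mod_cast h2
          push_cast
          constructor <;> linarith
end

section
/- Let n ≥ 1, let d ≥ 1 be an integer, let x = (x₁,…,xₙ) ∈ ℤⁿ, τ ∈ ℤ, set α = d + 1 and q = d·Σ_{i=1}^n |xᵢ| + |τ| + 1, and for each sign pattern s ∈ {−1, +1}ⁿ let t_s = (ατ, s₁·(d+1)/2, …, sₙ·(d+1)/2) ∈ ℝ^{n+1} and r = (d−1)/2. Then there exists c ∈ ℤⁿ with 1 ≤ |cᵢ| ≤ d for all i and Σ_{i=1}^n cᵢxᵢ = τ if and only if there exist s ∈ {−1, +1}ⁿ and v ∈ L_{α,q} with ‖v − t_s‖∞ ≤ r. -/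
/-- GSS with `C = [±d]` via `2ⁿ` CVP∞ instances: with `α = d+1`,
`q = d ∑ |xᵢ| + |τ| + 1`, `r = (d-1)/2` and, for each sign pattern `s ∈ {±1}ⁿ`,
target `t_s = (ατ, s₁(d+1)/2, …, sₙ(d+1)/2)`: a solution `c` with
`1 ≤ |cᵢ| ≤ d` and `∑ cᵢ xᵢ = τ` exists iff for some sign pattern `s` some
lattice vector is within ℓ∞-distance `r` of `t_s`. -/
theorem gss_pm_d_sign_boxes (n : ℕ) (hn : 1 ≤ n)
    (d : ℤ) (hd : 1 ≤ d) (x : Fin n → ℤ) (τ : ℤ) :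
    (∃ c : Fin n → ℤ, (∀ i, 1 ≤ |c i| ∧ |c i| ≤ d) ∧ ∑ i, c i * x i = τ) ↔
    (∃ s : Fin n → ℤ, (∀ i, s i = 1 ∨ s i = -1) ∧
      ∃ v ∈ latticeSet n x (d + 1) (d * (∑ i, |x i|) + |τ| + 1),
        ‖(fun i => (v i : ℝ)) -
            Fin.cons (((d : ℝ) + 1) * τ)
              (fun i : Fin n => (s i : ℝ) * ((d : ℝ) + 1) / 2)‖
            ≤ ((d : ℝ) - 1) / 2) := by
  have hd1 : (1 : ℝ) ≤ (d : ℝ) := by exact_mod_cast hd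
  have hr : (0 : ℝ) ≤ ((d : ℝ) - 1) / 2 := by linarith
  set q : ℤ := d * (∑ i, |x i|) + |τ| + 1 with hqdef
  have hqpos : 0 < q := by
    have h1 : 0 ≤ ∑ i, |x i| := Finset.sum_nonneg fun i _ => abs_nonneg _
    have : 0 ≤ d * ∑ i, |x i| := mul_nonneg (by linarith) h1
    have := abs_nonneg τ
    omega
  constructor
  · rintro ⟨c, hc, hsum⟩
    refine ⟨fun i => if 0 < c i then 1 else -1, fun i => by by_cases h : 0 < c i <;> simp [h], ?_⟩
    refine ⟨Fin.cons ((d + 1) * (q * 0 + ∑ i, c i * x i)) c, ⟨0, c, rfl⟩, ?_⟩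
    rw [pi_norm_le_iff_of_nonneg hr]
    intro i
    induction i using Fin.cases with
    | zero =>
      simp only [Pi.sub_apply, Fin.cons_zero, Real.norm_eq_abs, hsum]
      push_cast
      rw [show ((d : ℝ) + 1) * ((q : ℝ) * 0 + (τ : ℝ)) - ((d : ℝ) + 1) * (τ : ℝ) = 0 by ring]
      simpa using hr
    | succ j =>
      simp only [Pi.sub_apply, Fin.cons_succ, Real.norm_eq_abs]
      obtain ⟨h1, h2⟩ := hc j
      by_cases hpos : 0 < c j
      · have h1' : (1 : ℤ) ≤ c j := hpos
        have h2' : c j ≤ d := le_trans (le_abs_self _) h2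
        have h1r : (1 : ℝ) ≤ (c j : ℝ) := by exact_mod_cast h1'
        have h2r : (c j : ℝ) ≤ (d : ℝ) := by exact_mod_cast h2'
        simp only [hpos, if_pos, Int.cast_one]
        rw [abs_le]
        constructor <;> linarith
      · have h1' : c j ≤ -1 := by
          have : c j ≤ 0 := not_lt.mp hpos
          rcases abs_cases (c j) with ⟨he, _⟩ | ⟨he, _⟩ <;> omega
        have h2' : -d ≤ c j := by
          rcases abs_cases (c j) with ⟨he, _⟩ | ⟨he, _⟩ <;> omega
        have h1r : (c j : ℝ) ≤ -1 := by exact_mod_cast h1'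
        have h2r : (-(d : ℝ)) ≤ (c j : ℝ) := by exact_mod_cast h2'
        simp only [hpos, if_neg, if_false, Int.cast_neg, Int.cast_one]
        rw [abs_le]
        constructor <;> linarith
  · rintro ⟨s, hs, v, ⟨z₀, z, rfl⟩, hnorm⟩
    rw [pi_norm_le_iff_of_nonneg hr] at hnorm
    have hzb : ∀ j, 1 ≤ |z j| ∧ |z j| ≤ d := by
      intro j
      have h := hnorm j.succ
      simp only [Pi.sub_apply, Fin.cons_succ, Real.norm_eq_abs] at h
      rw [abs_le] at h
      rcases hs j with hsj | hsj
      · rw [hsj] at h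
        simp only [Int.cast_one, one_mul] at h
        have h1 : (1 : ℝ) ≤ (z j : ℝ) := by linarith [h.1, h.2]
        have h2 : (z j : ℝ) ≤ (d : ℝ) := by linarith [h.1, h.2]
        have h1' : (1 : ℤ) ≤ z j := by exact_mod_cast h1
        have h2' : z j ≤ d := by exact_mod_cast h2
        constructor <;> rw [abs_of_pos (by omega)] <;> omega
      · rw [hsj] at h
        simp only [Int.cast_neg, Int.cast_one, neg_mul, one_mul] at h
        have h1 : (z j : ℝ) ≤ -1 := by linarith [h.1, h.2]
        have h2 : (-(d : ℝ)) ≤ (z j : ℝ) := by linarith [h.1, h.2]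
        have h1' : z j ≤ -1 := by exact_mod_cast h1
        have h2' : -d ≤ z j := by exact_mod_cast h2
        constructor <;> rw [abs_of_neg (by omega)] <;> omega
    have h0 := hnorm 0
    simp only [Pi.sub_apply, Fin.cons_zero, Real.norm_eq_abs] at h0
    obtain ⟨S, hSdef⟩ : ∃ S : ℤ, S = q * z₀ + ∑ i, z i * x i := ⟨_, rfl⟩
    rw [← hSdef] at h0
    have h0' : |((d : ℝ) + 1) * ((S : ℝ) - (τ : ℝ))| ≤ ((d : ℝ) - 1) / 2 := by
      have : (((d + 1) * S : ℤ) : ℝ) - ((d : ℝ) + 1) * (τ : ℝ)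
          = ((d : ℝ) + 1) * ((S : ℝ) - (τ : ℝ)) := by push_cast; ring
      rw [← this]
      exact_mod_cast h0
    have hSτ : S = τ := by
      by_contra hne
      have h1 : (1 : ℤ) ≤ |S - τ| := Int.one_le_abs (sub_ne_zero.mpr hne)
      have h1r : (1 : ℝ) ≤ |(S : ℝ) - (τ : ℝ)| := by exact_mod_cast h1
      rw [abs_mul, abs_of_pos (by linarith : (0:ℝ) < (d:ℝ)+1)] at h0'
      nlinarith
    have hsum_bound : |∑ i, z i * x i| ≤ d * ∑ i, |x i| := by
      calc |∑ i, z i * x i| ≤ ∑ i, |z i * x i| := Finset.abs_sum_le_sum_abs _ _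
        _ ≤ ∑ i, d * |x i| := by
            refine Finset.sum_le_sum fun i _ => ?_
            rw [abs_mul]
            exact mul_le_mul_of_nonneg_right (hzb i).2 (abs_nonneg _)
        _ = d * ∑ i, |x i| := by rw [Finset.mul_sum]
    have hS2 : q * z₀ + ∑ i, z i * x i = τ := by rw [← hSdef]; exact hSτ
    have hz0 : z₀ = 0 := by
      by_contra hne
      have h1 : 1 ≤ |z₀| := Int.one_le_abs hne
      have hge : q ≤ q * |z₀| := le_mul_of_one_le_right (le_of_lt hqpos) h1
      have hq0 : |q * z₀| = q * |z₀| := by rw [abs_mul, abs_of_pos hqpos]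
      have heq : q * z₀ = τ - ∑ i, z i * x i := by omega
      have hle : |q * z₀| ≤ |τ| + d * ∑ i, |x i| := by
        rw [heq]
        calc |τ - ∑ i, z i * x i| ≤ |τ| + |∑ i, z i * x i| := abs_sub _ _
          _ ≤ |τ| + d * ∑ i, |x i| := by linarith
      omega
    refine ⟨z, hzb, ?_⟩
    rw [hz0] at hS2
    simpa using hS2
end

section
/- Let n ≥ 1 and let M be an integer with M ≥ 4ⁿ, and set d₀ = ⌊M^{1/n}/4⌋ (floor of one quarter of the real n-th root of M). Then the number of vectors x ∈ {0, 1, …, M−1}ⁿ for which there exists a nonzero c ∈ ℤⁿ with |cᵢ| ≤ d₀ for all i and Σ_{i=1}^n cᵢxᵢ = 0 is at most (3/4)ⁿ · Mⁿ. Equivalently, for x uniform on {0,…,M−1}ⁿ, with probability at least 1 − (3/4)ⁿ every nonzero integer vector c with c·x = 0 satisfies ‖c‖∞ > M^{1/n}/4. -/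
open scoped Classical

/-!
If `cᵢ ≠ 0`, the hyperplane `c · x = 0` meets the box `{0,…,M-1}ⁿ` in at most `M^(n-1)`
points, because `xᵢ` is determined by the other coordinates. There are at most
`(2d₀ + 1)ⁿ ≤ (3/4 · M^(1/n))ⁿ = (3/4)ⁿ M` candidate vectors `c`, so a union bound leaves at
most `(3/4)ⁿ Mⁿ` bad points. Every other point is good, since `‖c‖∞ ≤ M^(1/n)/4` forces
`|cᵢ| ≤ d₀`.
-/

open Finset

section Counting

variable {ι : Type*} [Fintype ι] [DecidableEq ι]

theorem card_filter_sum_mul_eq_zero_le {R : Type*} [Ring R] [NoZeroDivisors R]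
    [DecidableEq R] (s : Finset R) {c : ι → R} (hc : c ≠ 0) :
    #((Fintype.piFinset fun _ : ι => s).filter fun x => ∑ i, c i * x i = 0)
      ≤ #s ^ (Fintype.card ι - 1) := by
  obtain ⟨i, hi⟩ := Function.ne_iff.mp hc
  have hcard : #(Fintype.piFinset fun _ : {j // j ≠ i} => s) = #s ^ (Fintype.card ι - 1) := by
    simp [Fintype.card_subtype_compl]
  rw [← hcard]
  refine card_le_card_of_injOn (fun x j => x j.1) (fun x hx => ?_) fun x hx y hy hxy => ?_
  · simp only [coe_filter, Fintype.mem_piFinset, Set.mem_ofPred_eq] at hx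
    simpa using fun j _ => hx.1 j
  · simp only [coe_filter, Set.mem_ofPred_eq] at hx hy
    have hrest : ∀ j : {j // j ≠ i}, x j = y j := fun j => congrFun hxy j
    rw [Fintype.sum_eq_add_sum_subtype_ne _ i] at hx hy
    simp only [hrest] at hx
    have hxi : x i = y i := mul_left_cancel₀ hi (add_right_cancel (hx.2.trans hy.2.symm))
    funext j
    by_cases hj : j = i
    · exact hj ▸ hxi
    · exact hrest ⟨j, hj⟩

theorem card_filter_exists_bounded_sum_mul_eq_zero_le (s : Finset ℤ) (d : ℤ) :
    #((Fintype.piFinset fun _ : ι => s).filter fun x =>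
        ∃ c : ι → ℤ, c ≠ 0 ∧ (∀ i, |c i| ≤ d) ∧ ∑ i, c i * x i = 0)
      ≤ #(Icc (-d) d) ^ Fintype.card ι * #s ^ (Fintype.card ι - 1) := by
  set C := (Fintype.piFinset fun _ : ι => Icc (-d) d).filter (· ≠ 0)
  calc _ ≤ #(C.biUnion fun c => (Fintype.piFinset fun _ : ι => s).filter
          fun x => ∑ i, c i * x i = 0) := by
        refine card_le_card fun x hx => ?_
        obtain ⟨hx, c, hc, hcd, hcx⟩ := mem_filter.mp hx
        refine mem_biUnion.mpr ⟨c, mem_filter.mpr ⟨?_, hc⟩, mem_filter.mpr ⟨hx, hcx⟩⟩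
        exact Fintype.mem_piFinset.mpr fun i => mem_Icc.mpr (abs_le.mp (hcd i))
    _ ≤ #C * #s ^ (Fintype.card ι - 1) :=
        card_biUnion_le_card_mul _ _ _ fun c hc =>
          card_filter_sum_mul_eq_zero_le s (mem_filter.mp hc).2
    _ ≤ _ := by
        gcongr
        exact (card_filter_le _ _).trans (by simp)

end Counting

theorem card_le_card_filter_add_card_filter {α : Type*} {s : Finset α} {p q : α → Prop}
    [DecidablePred p] [DecidablePred q] (h : ∀ x ∈ s, ¬p x → q x) :
    #s ≤ #(s.filter p) + #(s.filter q) := by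
  rw [← card_filter_add_card_filter_not p]
  exact Nat.add_le_add_left (card_le_card (monotone_filter_right s h)) _

theorem abs_le_floor_of_norm_le {ι : Type*} [Fintype ι] {c : ι → ℤ} {r : ℝ} (h : ‖c‖ ≤ r)
    (i : ι) : |c i| ≤ ⌊r⌋ :=
  Int.le_floor.mpr <| by simpa [Int.norm_eq_abs] using (norm_le_pi_norm c i).trans h

theorem card_Icc_neg_floor_div_four_le {r : ℝ} (hr : 4 ≤ r) :
    (#(Icc (-⌊r / 4⌋) ⌊r / 4⌋) : ℝ) ≤ 3 / 4 * r := by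
  have hd : 0 ≤ ⌊r / 4⌋ := Int.floor_nonneg.mpr (by linarith)
  have hcard : (#(Icc (-⌊r / 4⌋) ⌊r / 4⌋) : ℤ) = 2 * ⌊r / 4⌋ + 1 := by
    rw [Int.card_Icc]; omega
  have hcardℝ : (#(Icc (-⌊r / 4⌋) ⌊r / 4⌋) : ℝ) = 2 * ⌊r / 4⌋ + 1 := by exact_mod_cast hcard
  linarith [Int.floor_le (r / 4)]

/-- For `M ≥ 4ⁿ` and `d₀ = ⌊M^(1/n)/4⌋`: at most `(3/4)ⁿ · Mⁿ` of the vectors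
`x ∈ {0,…,M-1}ⁿ` admit a nonzero `c` with `|cᵢ| ≤ d₀` and `∑ cᵢ xᵢ = 0`;
equivalently, for at least `(1 - (3/4)ⁿ) · Mⁿ` of them every nonzero integer
`c` with `c · x = 0` has `‖c‖∞ > M^(1/n)/4`. -/
theorem first_minimum_large_whp (n : ℕ) (hn : 1 ≤ n) (M : ℕ) (hM : 4 ^ n ≤ M)
    (d₀ : ℤ) (hd₀ : d₀ = ⌊(M : ℝ) ^ ((1 : ℝ) / n) / 4⌋) :
    ((((Fintype.piFinset fun _ : Fin n => Finset.Icc (0 : ℤ) ((M : ℤ) - 1)).filter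
          (fun x => ∃ c : Fin n → ℤ, c ≠ 0 ∧ (∀ i, |c i| ≤ d₀) ∧
            ∑ i, c i * x i = 0)).card : ℝ)
        ≤ (3 / 4 : ℝ) ^ n * (M : ℝ) ^ n) ∧
    ((1 - (3 / 4 : ℝ) ^ n) * (M : ℝ) ^ n
        ≤ (((Fintype.piFinset fun _ : Fin n => Finset.Icc (0 : ℤ) ((M : ℤ) - 1)).filter
            (fun x => ∀ c : Fin n → ℤ, c ≠ 0 → ∑ i, c i * x i = 0 →
              (M : ℝ) ^ ((1 : ℝ) / n) / 4 < ‖c‖)).card : ℝ)) := by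
  have hn0 : n ≠ 0 := by omega
  have hr4 : (4 : ℝ) ≤ (M : ℝ) ^ ((1 : ℝ) / n) := by
    rw [one_div, Real.le_rpow_inv_iff_of_pos (by norm_num) (by positivity) (by positivity),
      Real.rpow_natCast]
    exact_mod_cast hM
  have hrn : ((M : ℝ) ^ ((1 : ℝ) / n)) ^ n = M := by
    rw [one_div, Real.rpow_inv_natCast_pow (Nat.cast_nonneg M) hn0]
  set r : ℝ := (M : ℝ) ^ ((1 : ℝ) / n)
  have hC : (#(Icc (-d₀) d₀) : ℝ) ≤ 3 / 4 * r := hd₀ ▸ card_Icc_neg_floor_div_four_le hr4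
  set box := Fintype.piFinset fun _ : Fin n => Icc (0 : ℤ) ((M : ℤ) - 1)
  set bad := fun x : Fin n → ℤ => ∃ c : Fin n → ℤ, c ≠ 0 ∧ (∀ i, |c i| ≤ d₀) ∧ ∑ i, c i * x i = 0
  set good := fun x : Fin n → ℤ => ∀ c : Fin n → ℤ, c ≠ 0 → ∑ i, c i * x i = 0 → r / 4 < ‖c‖
  have hbad : (#(box.filter bad) : ℝ) ≤ (3 / 4) ^ n * M ^ n := by
    calc _ ≤ (#(Icc (-d₀) d₀) : ℝ) ^ n * (M : ℝ) ^ (n - 1) := by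
          exact_mod_cast (card_filter_exists_bounded_sum_mul_eq_zero_le _ d₀).trans_eq
            (by simp)
      _ ≤ (3 / 4 * r) ^ n * (M : ℝ) ^ (n - 1) := by gcongr
      _ = (3 / 4) ^ n * M ^ n := by
          rw [mul_pow, hrn, mul_assoc, ← pow_succ', Nat.sub_add_cancel hn]
  have hcover : #box ≤ #(box.filter bad) + #(box.filter good) :=
    card_le_card_filter_add_card_filter fun x _ hx c hc hcx => by
      by_contra! hle
      exact hx ⟨c, hc, fun i => hd₀ ▸ abs_le_floor_of_norm_le hle i, hcx⟩
  have hcoverℝ : (M : ℝ) ^ n ≤ #(box.filter bad) + #(box.filter good) := by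
    simpa [box] using (Nat.cast_le (α := ℝ)).mpr hcover
  exact ⟨hbad, by linarith⟩
end
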